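/- arXiv:1601.05906 — 7 statements merged into one kernel-verified Lean document; each statement's English description precedes it below -/
import Mathlib

section
/- Let n ≥ 4 and for X ∈ sl_n(ℂ) put μ(X) = X_{n,1}·X_{n−1,2} − X_{n−1,1}·X_{n,2}. If X ∈ sl_n(ℂ) is nilpotent and μ(g·X·g⁻¹) = 0 for every g ∈ GL_n(ℂ), then rank X ≤ 1; that is, X lies in the closure of the minimal nilpotent orbit of sl_n(ℂ). -/
/-!
If `rank X ≥ 2`, there are `v, w` with `v, Xv, w, Xw` linearly independent: take `v = x`,
`w = X²x` for a chain `x, Xx, X²x, X³x ≠ 0`; if `X² = 0`, any `v, w` with `Xv, Xw` independent;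
if `X³ = 0 ≠ X²`, `v = a` with `X²a ≠ 0` and `w = Xa + c` for some `c ∈ ker X` outside
`span (a, Xa, X²a)`, which exists because `n ≥ 4` and `X` is nilpotent. A `g ∈ GL_n` sending
`v, Xv, w, Xw` to `e₁, e_{n-1}, e₂, e_n` turns the first two columns of `gXg⁻¹` into
`e_{n-1}, e_n`, so `μ(gXg⁻¹) = -1`.
-/

open Matrix

noncomputable section

abbrev Mat (n : ℕ) := Matrix (Fin n) (Fin n) ℂ

abbrev GLn (n : ℕ) := Matrix.GeneralLinearGroup (Fin n) ℂ

open Module Submodule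

namespace Module.End

variable {K V : Type*} [Field K] [AddCommGroup V] [Module K V] {f : Module.End K V}

theorem linearIndependent_pow_apply {k : ℕ} {x : V} (hk : (f ^ k) x ≠ 0)
    (hk' : (f ^ (k + 1)) x = 0) : LinearIndependent K fun i : Fin (k + 1) => (f ^ (i : ℕ)) x := by
  induction k generalizing x with
  | zero => exact (linearIndependent_unique_iff (ι := Fin 1)).mpr (by simpa using hk)
  | succ k ih =>
    have hcons : (fun i : Fin (k + 2) => (f ^ (i : ℕ)) x) =
        Fin.cons x fun i : Fin (k + 1) => (f ^ (i : ℕ)) (f x) := by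
      ext i : 1
      refine Fin.cases ?_ (fun i => ?_) i <;> simp [pow_succ]
    -- `f ^ (k + 1)` kills the tail of the chain but not its head `x`.
    have hspan : span K (Set.range fun i : Fin (k + 1) => (f ^ (i : ℕ)) (f x)) ≤
        LinearMap.ker (f ^ (k + 1)) := by
      rw [span_le]
      rintro _ ⟨i, rfl⟩
      rw [SetLike.mem_coe, LinearMap.mem_ker, ← mul_apply, ← mul_apply, ← pow_add, ← pow_succ,
        show k + 1 + i + 1 = i + (k + 2) by omega, pow_add, mul_apply, hk', map_zero]
    rw [hcons, linearIndependent_finCons]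
    rw [pow_succ, mul_apply] at hk hk'
    exact ⟨ih hk hk', fun hx => hk (hspan hx)⟩

theorem exists_notMem_apply_mem_of_pow_apply_mem {C : Submodule K V} {N : ℕ} {z : V}
    (hz : z ∉ C) (hN : (f ^ N) z ∈ C) : ∃ y ∉ C, f y ∈ C := by
  induction N generalizing z with
  | zero => exact absurd hN hz
  | succ N ih =>
    by_cases hfz : f z ∈ C
    · exact ⟨z, hz, hfz⟩
    · exact ih hfz (by rwa [← mul_apply, ← pow_succ])

theorem exists_notMem_apply_mem (hf : IsNilpotent f) {C : Submodule K V} {z : V} (hz : z ∉ C) :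
    ∃ y ∉ C, f y ∈ C :=
  let ⟨N, hN⟩ := hf
  exists_notMem_apply_mem_of_pow_apply_mem (N := N) hz (by simp [hN])

theorem exists_linearIndependent_pow_apply (hf : IsNilpotent f) {k : ℕ} (hk : f ^ k ≠ 0) :
    ∃ x, LinearIndependent K fun i : Fin (k + 1) => (f ^ (i : ℕ)) x := by
  obtain ⟨z, hz⟩ := DFunLike.ne_iff.mp hk
  obtain ⟨x, hx, hfx⟩ := exists_notMem_apply_mem hf (C := LinearMap.ker (f ^ k)) hz
  exact ⟨x, linearIndependent_pow_apply hx (by rwa [pow_succ, mul_apply])⟩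

theorem linearIndependent_of_sq_eq_zero (hf : f ^ 2 = 0) {v w : V}
    (h : LinearIndependent K ![f v, f w]) : LinearIndependent K ![v, f v, w, f w] := by
  have hff : ∀ u, f (f u) = 0 := fun u => by simpa [sq] using LinearMap.congr_fun hf u
  rw [LinearIndependent.pair_iff] at h
  rw [Fintype.linearIndependent_iff]
  intro g hg
  simp only [Fin.sum_univ_four, Matrix.cons_val] at hg
  have hfg := congrArg f hg
  simp only [map_add, map_smul, hff, smul_zero, add_zero, map_zero] at hfg
  obtain ⟨h0, h2⟩ := h _ _ hfg
  simp only [h0, h2, zero_smul, zero_add, add_zero] at hg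
  obtain ⟨h1, h3⟩ := h _ _ hg
  intro i
  fin_cases i <;> assumption

theorem exists_linearIndependent_of_sq_eq_zero (hf : f ^ 2 = 0)
    (hr : 2 ≤ finrank K (LinearMap.range f)) : ∃ v w, LinearIndependent K ![v, f v, w, f w] := by
  obtain ⟨u, hu⟩ := exists_linearIndependent_of_le_finrank hr
  obtain ⟨v, hv⟩ := (u 0).2
  obtain ⟨w, hw⟩ := (u 1).2
  have huvw : ![f v, f w] = (LinearMap.range f).subtype ∘ u := by
    ext i : 1
    fin_cases i <;> simp [hv, hw]
  refine ⟨v, w, linearIndependent_of_sq_eq_zero hf ?_⟩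
  rw [huvw]
  exact hu.map' _ (ker_subtype _)

theorem exists_apply_eq_zero_notMem_span (hf : f ^ 3 = 0) {a y : V} (ha : f (f a) ≠ 0)
    (hy : y ∉ span K (Set.range ![a, f a, f (f a)]))
    (hfy : f y ∈ span K (Set.range ![a, f a, f (f a)])) :
    ∃ c, f c = 0 ∧ c ∉ span K (Set.range ![a, f a, f (f a)]) := by
  have hf3 : ∀ u, f (f (f u)) = 0 := fun u => by simpa [pow_succ] using LinearMap.congr_fun hf u
  obtain ⟨t, ht⟩ := (mem_span_range_iff_exists_fun K).mp hfy
  simp only [Fin.sum_univ_three, Matrix.cons_val] at ht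
  have ht0 : t 0 = 0 := by
    have := congrArg (fun u => f (f u)) ht
    simp only [map_add, map_smul, hf3, smul_zero, add_zero] at this
    exact (smul_eq_zero.mp this).resolve_right ha
  have hmem : t 1 • a + t 2 • f a ∈ span K (Set.range ![a, f a, f (f a)]) :=
    add_mem (smul_mem _ _ (subset_span ⟨0, rfl⟩)) (smul_mem _ _ (subset_span ⟨1, rfl⟩))
  refine ⟨y - (t 1 • a + t 2 • f a), ?_, fun h => hy ?_⟩
  · rw [map_sub, ← ht, ht0]
    simp
  · simpa using add_mem h hmem

theorem linearIndependent_of_notMem_span_of_apply_eq_zero {a c : V}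
    (ha : LinearIndependent K ![a, f a, f (f a)])
    (hc : c ∉ span K (Set.range ![a, f a, f (f a)])) (hfc : f c = 0) :
    LinearIndependent K ![a, f a, f a + c, f (f a + c)] := by
  have hcons : LinearIndependent K ![c, a, f a, f (f a)] := linearIndependent_finCons.mpr ⟨ha, hc⟩
  rw [Fintype.linearIndependent_iff] at hcons ⊢
  intro g hg
  have h := hcons ![g 2, g 0, g 1 + g 2, g 3] (by
    simp only [Fin.sum_univ_four, Matrix.cons_val] at hg ⊢
    rw [map_add, hfc, add_zero] at hg
    linear_combination (norm := module) hg)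
  intro i
  fin_cases i
  · simpa using h 1
  · simpa [show g 2 = 0 by simpa using h 0] using h 2
  · simpa using h 0
  · simpa using h 3

theorem exists_linearIndependent_of_pow_three_eq_zero [FiniteDimensional K V]
    (hV : 4 ≤ finrank K V) (h3 : f ^ 3 = 0) (h2 : f ^ 2 ≠ 0) :
    ∃ v w, LinearIndependent K ![v, f v, w, f w] := by
  have hf : IsNilpotent f := ⟨3, h3⟩
  obtain ⟨a, ha⟩ := exists_linearIndependent_pow_apply hf h2
  replace ha : LinearIndependent K ![a, f a, f (f a)] := by
    convert ha using 1
    ext i : 1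
    fin_cases i <;> simp [pow_succ]
  have hlt : span K (Set.range ![a, f a, f (f a)]) < ⊤ := by
    refine lt_top_of_finrank_lt_finrank ((finrank_range_le_card _).trans_lt ?_)
    simp only [Fintype.card_fin]
    omega
  obtain ⟨z, -, hz⟩ := SetLike.exists_of_lt hlt
  obtain ⟨y, hy, hfy⟩ := exists_notMem_apply_mem hf hz
  obtain ⟨c, hfc, hc⟩ := exists_apply_eq_zero_notMem_span h3 (ha.ne_zero 2) hy hfy
  exact ⟨a, f a + c, linearIndependent_of_notMem_span_of_apply_eq_zero ha hc hfc⟩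

theorem exists_linearIndependent_of_isNilpotent [FiniteDimensional K V] (hV : 4 ≤ finrank K V)
    (hf : IsNilpotent f) (hr : 2 ≤ finrank K (LinearMap.range f)) :
    ∃ v w, LinearIndependent K ![v, f v, w, f w] := by
  by_cases h3 : f ^ 3 = 0
  · by_cases h2 : f ^ 2 = 0
    · exact exists_linearIndependent_of_sq_eq_zero h2 hr
    · exact exists_linearIndependent_of_pow_three_eq_zero hV h3 h2
  · obtain ⟨x, hx⟩ := exists_linearIndependent_pow_apply hf h3
    refine ⟨x, f (f x), ?_⟩
    convert hx using 1
    ext i : 1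
    fin_cases i <;> simp [pow_succ]

end Module.End

theorem exists_linearEquiv_apply_eq {K V ι : Type*} [Field K] [AddCommGroup V] [Module K V]
    [FiniteDimensional K V] {u u' : ι → V} (hu : LinearIndependent K u)
    (hu' : LinearIndependent K u') : ∃ e : V ≃ₗ[K] V, ∀ i, e (u i) = u' i := by
  set S := span K (Set.range u)
  set S' := span K (Set.range u')
  obtain ⟨T, hT⟩ := S.exists_isCompl
  obtain ⟨T', hT'⟩ := S'.exists_isCompl
  let eS : S ≃ₗ[K] S' := (Basis.span hu).equiv (Basis.span hu') (Equiv.refl ι)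
  have hTT' : finrank K T = finrank K T' := by
    have := finrank_add_eq_of_isCompl hT
    have := finrank_add_eq_of_isCompl hT'
    have := eS.finrank_eq
    omega
  refine ⟨(S.prodEquivOfIsCompl T hT).symm ≪≫ₗ eS.prodCongr (LinearEquiv.ofFinrankEq T T' hTT')
    ≪≫ₗ S'.prodEquivOfIsCompl T' hT', fun i => ?_⟩
  have hi : u i = ((Basis.span hu i : S) : V) := by rw [Basis.span_apply]
  rw [LinearEquiv.trans_apply, LinearEquiv.trans_apply, hi, prodEquivOfIsCompl_symm_apply_left,
    LinearEquiv.prodCongr_apply, map_zero, coe_prodEquivOfIsCompl', ZeroMemClass.coe_zero,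
    add_zero, Basis.equiv_apply, Equiv.refl_apply, Basis.span_apply]

namespace Matrix.GeneralLinearGroup

variable {K n : Type*} [Field K] [Fintype n] [DecidableEq n]

theorem exists_mulVec_eq {ι : Type*} {u u' : ι → n → K} (hu : LinearIndependent K u)
    (hu' : LinearIndependent K u') : ∃ g : GL n K, ∀ i, (g : Matrix n n K) *ᵥ u i = u' i := by
  obtain ⟨e, he⟩ := exists_linearEquiv_apply_eq hu hu'
  refine ⟨toLin.symm ((LinearMap.GeneralLinearGroup.generalLinearEquiv K (n → K)).symm e),
    fun i => ?_⟩
  rw [← he i]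
  exact LinearMap.toMatrix'_mulVec (e : (n → K) →ₗ[K] n → K) (u i)

theorem conj_apply_of_mulVec_eq_single (g : GL n K) (X : Matrix n n K) {v : n → K} {j : n}
    (hv : (g : Matrix n n K) *ᵥ v = Pi.single j 1) (i : n) :
    ((g : Matrix n n K) * X * (↑g⁻¹ : Matrix n n K)) i j = ((g : Matrix n n K) *ᵥ (X *ᵥ v)) i := by
  calc ((g : Matrix n n K) * X * (↑g⁻¹ : Matrix n n K)) i j
      = (((g : Matrix n n K) * X * (↑g⁻¹ : Matrix n n K)) *ᵥ Pi.single j 1) i := by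
        rw [mulVec_single_one, col_apply]
    _ = ((g : Matrix n n K) *ᵥ (X *ᵥ v)) i := by
        rw [← hv, mulVec_mulVec, Matrix.mul_assoc, ← GeneralLinearGroup.coe_mul, inv_mul_cancel,
          GeneralLinearGroup.coe_one, Matrix.mul_one, mulVec_mulVec]

end Matrix.GeneralLinearGroup

theorem stmt_5 (n : ℕ) (hn : 4 ≤ n)
    -- `μ(X) = X_{n,1}·X_{n−1,2} − X_{n−1,1}·X_{n,2}` (1-based indices)
    (mu : Mat n → ℂ)
    (hmu : mu = fun X =>
      X ⟨n - 1, by omega⟩ ⟨0, by omega⟩ * X ⟨n - 2, by omega⟩ ⟨1, by omega⟩ -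
      X ⟨n - 2, by omega⟩ ⟨0, by omega⟩ * X ⟨n - 1, by omega⟩ ⟨1, by omega⟩)
    (X : Mat n) (hXnil : IsNilpotent X)
    (hvanish : ∀ g : GLn n, mu ((↑g : Mat n) * X * (↑g⁻¹ : Mat n)) = 0) :
    X.rank ≤ 1 := by
  by_contra! hrank
  obtain ⟨v, w, hvw⟩ := Module.End.exists_linearIndependent_of_isNilpotent (f := toLin' X)
    (by simpa using hn) (hXnil.map toLinAlgEquiv') (by rwa [toLin'_apply'])
  let p : Fin 4 → Fin n := ![⟨0, by omega⟩, ⟨n - 2, by omega⟩, ⟨1, by omega⟩, ⟨n - 1, by omega⟩]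
  have hp : Function.Injective p := by
    intro i j h
    fin_cases i <;> fin_cases j <;> simp [p, Fin.ext_iff] at h ⊢ <;> omega
  obtain ⟨g, hg⟩ := GeneralLinearGroup.exists_mulVec_eq hvw
    ((Pi.basisFun ℂ (Fin n)).linearIndependent.comp p hp)
  have hcol0 := GeneralLinearGroup.conj_apply_of_mulVec_eq_single g X (by simpa [p] using hg 0)
  have hcol1 := GeneralLinearGroup.conj_apply_of_mulVec_eq_single g X (by simpa [p] using hg 2)
  have hv : (g : Mat n) *ᵥ (X *ᵥ v) = Pi.single ⟨n - 2, by omega⟩ 1 := by simpa [p] using hg 1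
  have hw : (g : Mat n) *ᵥ (X *ᵥ w) = Pi.single ⟨n - 1, by omega⟩ 1 := by simpa [p] using hg 3
  have hμ := hvanish g
  rw [hmu] at hμ
  simp only [hcol0, hcol1, hv, hw] at hμ
  simp [Fin.ext_iff, show n - 2 ≠ n - 1 by omega] at hμ
end
end

section
/- Let m ≥ 2. If X ∈ sl_{2m}(ℂ) is nilpotent and the (2m,1) entry of g·X²·g⁻¹ vanishes for every g ∈ GL_{2m}(ℂ), then X² = 0 (hence also rank X ≤ m, i.e. X lies in the closure of the nilpotent conjugation orbit corresponding to the partition (2^m) of 2m). -/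
/-!
Write `A = X²`. Conjugating by permutation matrices moves the `(2m,1)` position to any
off-diagonal position, so every conjugate of `A` has zero off-diagonal entries; conjugating once
more by a transvection `1 + E_ij` then forces `A i i = A j j`. Hence `A` is scalar, and being
nilpotent it vanishes. Finally `X² = 0` gives `im X ⊆ ker X`, i.e. `2 rank X ≤ 2m`.
-/

open Matrix

noncomputable section

namespace Matrix

variable {n R : Type*} [Fintype n] [DecidableEq n] [CommRing R]

theorem conj_mul (g h : GL n R) (A : Matrix n n R) :
    ((g * h : GL n R) : Matrix n n R) * A * (↑(g * h)⁻¹ : Matrix n n R) =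
      (g : Matrix n n R) * ((h : Matrix n n R) * A * (↑h⁻¹ : Matrix n n R)) *
        (↑g⁻¹ : Matrix n n R) := by
  simp only [_root_.mul_inv_rev, Units.val_mul, Matrix.mul_assoc]

theorem permMatrix_mul_mul_permMatrix_inv_apply (σ : Equiv.Perm n) (B : Matrix n n R) (i j : n) :
    (σ.permMatrix R * B * σ⁻¹.permMatrix R) i j = B (σ i) (σ j) := by
  rw [Equiv.Perm.permMatrix, Equiv.Perm.permMatrix, PEquiv.toMatrix_toPEquiv_mul,
    PEquiv.mul_toMatrix_toPEquiv]
  simp [Equiv.Perm.inv_def]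

theorem conj_apply_eq_zero_of_forall_conj_apply_eq_zero {A : Matrix n n R} {p q : n}
    (hpq : p ≠ q)
    (h : ∀ g : GL n R, ((g : Matrix n n R) * A * (↑g⁻¹ : Matrix n n R)) p q = 0)
    (g : GL n R) {i j : n} (hij : i ≠ j) :
    ((g : Matrix n n R) * A * (↑g⁻¹ : Matrix n n R)) i j = 0 := by
  obtain ⟨σ, hσi, hσj⟩ :=
    MulAction.is_two_pretransitive_iff.mp (Equiv.Perm.isMultiplyPretransitive n 2) hij hpq
  let P : GL n R := permMatrixHom.toHomUnits σ
  have key := h (P * g)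
  rw [conj_mul] at key
  rw [← map_inv, MonoidHom.coe_toHomUnits, MonoidHom.coe_toHomUnits, permMatrixHom_apply,
    permMatrixHom_apply, permMatrix_mul_mul_permMatrix_inv_apply, ← hσi, ← hσj] at key
  simpa using key

theorem apply_self_eq_of_forall_conj_offDiag_eq_zero {A : Matrix n n R}
    (h : ∀ g : GL n R, ∀ i j, i ≠ j →
      ((g : Matrix n n R) * A * (↑g⁻¹ : Matrix n n R)) i j = 0) (i j : n) :
    A i i = A j j := by
  rcases eq_or_ne i j with rfl | hij
  · rfl
  let T : GL n R :=
    ⟨transvection i j 1, transvection i j (-1),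
      by simp [transvection_mul_transvection_same i j hij],
      by simp [transvection_mul_transvection_same i j hij]⟩
  have hA : A i j = 0 ∧ A j i = 0 := by simpa using And.intro (h 1 i j hij) (h 1 j i hij.symm)
  have key := h T i j hij
  simp only [T, Units.inv_mk, mul_transvection_apply_same, transvection_mul_apply_same, hA.1,
    hA.2, one_mul, zero_add, mul_zero, add_zero, neg_mul] at key
  linear_combination -key

theorem eq_scalar_of_forall_conj_apply_eq_zero {A : Matrix n n R} {p q : n}
    (hpq : p ≠ q)
    (h : ∀ g : GL n R, ((g : Matrix n n R) * A * (↑g⁻¹ : Matrix n n R)) p q = 0) :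
    A = scalar n (A q q) := by
  have hconj := conj_apply_eq_zero_of_forall_conj_apply_eq_zero hpq h
  ext i j
  rcases eq_or_ne i j with rfl | hij
  · simpa using apply_self_eq_of_forall_conj_offDiag_eq_zero (fun g _ _ ↦ hconj g) i q
  · simpa [hij] using hconj 1 hij

theorem eq_zero_of_isNilpotent_of_eq_scalar [IsReduced R] {A : Matrix n n R} {c : R}
    (hA : IsNilpotent A) (hc : A = scalar n c) : A = 0 := by
  cases isEmpty_or_nonempty n
  · exact Subsingleton.elim _ _
  · have hnil : IsNilpotent (scalar n c) := hc ▸ hA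
    rw [hc, ((IsNilpotent.map_iff fun _ _ ↦ scalar_inj.mp).mp hnil).eq_zero, map_zero]

end Matrix

theorem Matrix.two_mul_rank_le_card_of_mul_self_eq_zero {n K : Type*} [Fintype n] [Field K]
    {A : Matrix n n K} (hA : A * A = 0) : 2 * A.rank ≤ Fintype.card n :=
  two_mul A.rank ▸ rank_add_rank_le_card_of_mul_eq_zero hA

theorem stmt_9 (m : ℕ) (hm : 2 ≤ m)
    (X : Mat (2 * m)) (hXnil : IsNilpotent X)
    -- the `(2m,1)` entry of `g·X²·g⁻¹` vanishes for every `g ∈ GL_{2m}(ℂ)`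
    (hvanish : ∀ g : GLn (2 * m),
      ((↑g : Mat (2 * m)) * (X * X) * (↑g⁻¹ : Mat (2 * m)))
        ⟨2 * m - 1, by omega⟩ ⟨0, by omega⟩ = 0) :
    X * X = 0 ∧ X.rank ≤ m := by
  have hpq : (⟨2 * m - 1, by omega⟩ : Fin (2 * m)) ≠ ⟨0, by omega⟩ := by
    rw [ne_eq, Fin.mk.injEq]
    omega
  have hsq : X * X = 0 :=
    eq_zero_of_isNilpotent_of_eq_scalar ((Commute.refl X).isNilpotent_mul_left hXnil)
      (eq_scalar_of_forall_conj_apply_eq_zero hpq hvanish)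
  have hrank := two_mul_rank_le_card_of_mul_self_eq_zero hsq
  rw [Fintype.card_fin] at hrank
  exact ⟨hsq, by omega⟩
end
end

section
/- Let m ≥ 2. For λ = (λ_1, …, λ_{2m−1}) ∈ ℂ^{2m−1} and 1 ≤ i ≤ 2m−1 define q̂_i(λ) = −(1/m)·Σ_{j=1}^{i−1} j·λ_j + ((m−i)/m)·λ_i + (1/m)·Σ_{j=i+1}^{2m−1} (2m−j)·λ_j + (m − i). Then λ satisfies λ_i·q̂_i(λ) = 0 for all i = 1, …, 2m−1 if and only if there exist s ∈ {1, …, 2m−1}, integers 1 ≤ i_1 < ⋯ < i_s ≤ 2m−1 with Σ_{k=1}^{s}(−1)^k·i_k = (−1)^s·m, and t ∈ ℂ, such that λ_{i_1} = t, λ_{i_j} = (−1)^j·(c_j − t) for 2 ≤ j ≤ s, where c_j = i_1 + 2·Σ_{k=2}^{j−1}(−1)^{k+1}·i_k + (−1)^{j+1}·i_j, and λ_k = 0 for every k ∉ {i_1, …, i_s}. -/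
/-!
Put `h_p = 2 ∑_{p ≤ l < 2m} λ_l + (2m - p)` (`height`), so that `h_{2m} = 0` and
`h_p = h_{p+1} + 2λ_p + 1`. A direct computation gives `2m q̂_p = m (h_p + h_{p+1}) - ∑_p h_p`, so
with `ν = (∑ h) / m` the equations say that `W_p = 2h_p - ν` flips, `W_{p+1} = -W_p`, at every `p`
in the support of `λ`, and drops, `W_{p+1} = W_p - 2`, at every other `p`; a drop with `W_p = 1`
is also a flip. Telescoping along such a walk gives `2 (∑ h - mν) = (h_1 - ν)(h_1 + 1)`.

For flips at `i_1 < ⋯ < i_s` the flip conditions become the recursion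
`λ_{i_k} + λ_{i_{k+1}} = i_k - i_{k+1}`, whose solutions form the line of the statement, and
following the walk from `W_1` to `W_{2m} = -ν` shows that the factor `h_1 - ν` (for odd `s`),
resp. `h_1 + 1` (for even `s`), equals `-2 (∑_k (-1)^k i_k - (-1)^s m)`. This gives the converse,
and the direct implication when the vanishing factor matches the parity of the support. Otherwise
`ν` is an odd integer, and `±W_p`, the sign flipped at each flip, starts and ends with opposite
signs while moving only at drops, by `2`; where it changes sign, `W_p = 1`, and adding that drop
to the flips fixes the parity.
-/

noncomputable section

open Finset

namespace ZhuVariety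

theorem neg_one_pow_sq {M : Type*} [Monoid M] [HasDistribNeg M] (j : ℕ) :
    ((-1 : M) ^ j) ^ 2 = 1 := by
  rw [← pow_mul, mul_comm, pow_mul, neg_one_sq, one_pow]

theorem exists_increasing_enum (I : Finset ℕ) :
    ∃ ii : ℕ → ℕ, (∀ k, 1 ≤ k → k ≤ #I → ii k ∈ I) ∧
      (∀ k l, 1 ≤ k → k < l → l ≤ #I → ii k < ii l) ∧
      ∀ x ∈ I, ∃ k, 1 ≤ k ∧ k ≤ #I ∧ ii k = x := by
  have hf : (Set.ofPred (· ∈ I)).Finite := I.finite_toSet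
  have hcard : #hf.toFinset = #I := by congr 1; ext; simp [Set.ofPred]
  refine ⟨fun k => Nat.nth (· ∈ I) (k - 1), fun k hk hkI => ?_, fun k l hk hkl hlI => ?_,
    fun x hx => ?_⟩
  · exact Nat.nth_mem_of_lt_card hf (by omega)
  · exact Nat.nth_strictMonoOn hf (by simp; omega) (by simp; omega) (by omega)
  · obtain ⟨n, hn, rfl⟩ := Nat.exists_lt_card_finite_nth_eq hf hx
    exact ⟨n + 1, by omega, by omega, rfl⟩

theorem exists_mul_nonpos_succ {f : ℕ → ℤ} {a b : ℕ} (hab : a ≤ b) (h : f a * f b < 0) :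
    ∃ p, a ≤ p ∧ p < b ∧ f p * f (p + 1) ≤ 0 := by
  induction b, hab using Nat.le_induction with
  | base => nlinarith
  | succ b hab ih =>
    by_cases hb : f b * f (b + 1) ≤ 0
    · exact ⟨b, hab, by omega, hb⟩
    · obtain ⟨p, hap, hpb, hp⟩ := ih (by
        by_contra! hnonneg
        nlinarith [mul_neg_of_neg_of_pos h (not_le.mp hb),
          mul_nonneg hnonneg (sq_nonneg (f (b + 1)))])
      exact ⟨p, hap, by omega, hp⟩

section Walk

variable {R : Type*} [CommRing R] {S : Finset ℕ} {n : ℕ} {W : ℕ → R}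

def IsFlipDropWalk (S : Finset ℕ) (n : ℕ) (W : ℕ → R) : Prop :=
  ∀ p, 1 ≤ p → p < n → W (p + 1) = if p ∈ S then -W p else W p - 2

theorem IsFlipDropWalk.four_mul_sum_Icc (hW : IsFlipDropWalk S n W) (hn : 1 ≤ n) :
    4 * ∑ p ∈ Icc 1 n, W p = (W 1 + W n) * (W 1 - W n + 2) := by
  induction n, hn using Nat.le_induction with
  | base => simp; ring
  | succ n hn ih =>
    rw [sum_Icc_succ_top (by omega), mul_add, ih fun p hp hpn => hW p hp (by omega),
      hW n hn (by omega)]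
    split_ifs <;> ring

def flipCount (S : Finset ℕ) (p : ℕ) : ℕ := #{q ∈ Ico 1 p | q ∈ S}

def flipSign (S : Finset ℕ) (p : ℕ) : ℤ := (-1) ^ flipCount S p

def dropSum (S : Finset ℕ) (p : ℕ) : ℤ := ∑ q ∈ Ico 1 p, if q ∈ S then 0 else flipSign S q

theorem flipCount_succ {p : ℕ} (hp : 1 ≤ p) :
    flipCount S (p + 1) = flipCount S p + if p ∈ S then 1 else 0 := by
  simp only [flipCount, card_filter, sum_Ico_succ_top hp]

theorem flipCount_of_subset (hS : S ⊆ Ico 1 n) : flipCount S n = #S := by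
  rw [flipCount, filter_mem_eq_inter, inter_eq_right.mpr hS]

theorem flipSign_succ {p : ℕ} (hp : 1 ≤ p) :
    flipSign S (p + 1) = if p ∈ S then -flipSign S p else flipSign S p := by
  rw [flipSign, flipSign, flipCount_succ hp]
  split_ifs <;> ring

theorem flipSign_eq_one_or (p : ℕ) : flipSign S p = 1 ∨ flipSign S p = -1 :=
  neg_one_pow_eq_or ℤ _

theorem dropSum_succ {p : ℕ} (hp : 1 ≤ p) :
    dropSum S (p + 1) = dropSum S p + if p ∈ S then 0 else flipSign S p := by
  rw [dropSum, dropSum, sum_Ico_succ_top hp]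

theorem dropSum_add_flipCount_modEq {p : ℕ} (hp : 1 ≤ p) :
    dropSum S p + flipCount S p + 1 ≡ p [ZMOD 2] := by
  induction p, hp using Nat.le_induction with
  | base => simp [dropSum, flipCount]
  | succ p hp ih =>
    have hsign : flipSign S p % 2 = 1 := by
      rcases flipSign_eq_one_or (S := S) p with h | h <;> rw [h] <;> rfl
    rw [dropSum_succ hp, flipCount_succ hp]
    unfold Int.ModEq at *
    split_ifs <;> push_cast <;> omega

theorem IsFlipDropWalk.flipSign_mul (hW : IsFlipDropWalk S n W) {p : ℕ} (hp : 1 ≤ p) (hpn : p ≤ n) :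
    flipSign S p * W p = W 1 - 2 * dropSum S p := by
  induction p, hp using Nat.le_induction with
  | base => simp [flipSign, flipCount, dropSum]
  | succ p hp ih =>
    have ih := ih (by omega)
    rw [hW p hp (by omega), flipSign_succ hp, dropSum_succ hp]
    split_ifs <;> push_cast <;> linear_combination ih

theorem IsFlipDropWalk.exists_eq_one (hW : IsFlipDropWalk S n W) {w : ℤ} (hw : W 1 = w)
    (hodd : Odd w) (hsign : w * (w - 2 * dropSum S n) < 0) :
    ∃ p, 1 ≤ p ∧ p < n ∧ p ∉ S ∧ W p = 1 := by
  obtain ⟨c, rfl⟩ := hodd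
  have hn : 1 ≤ n := by
    by_contra! hn
    obtain rfl : n = 0 := by omega
    simp [dropSum] at hsign
    nlinarith
  obtain ⟨p, hp, hpn, hfp⟩ := exists_mul_nonpos_succ (f := fun p => 2 * c + 1 - 2 * dropSum S p)
    hn (by simpa [dropSum] using hsign)
  have hstep := dropSum_succ (S := S) hp
  have hpS : p ∉ S := by
    intro hpS
    simp only [hpS, if_true, add_zero] at hstep
    simp only [hstep] at hfp
    have := mul_self_eq_zero.mp (le_antisymm hfp (mul_self_nonneg _))
    omega
  have hfp_eq : 2 * c + 1 - 2 * dropSum S p = flipSign S p := by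
    simp only [hpS, if_false] at hstep
    simp only [hstep] at hfp
    rcases flipSign_eq_one_or (S := S) p with h | h <;> rw [h] at hfp ⊢
    · have : c - dropSum S p ≤ 0 := by nlinarith
      have : 0 ≤ c - dropSum S p := by nlinarith
      omega
    · have : c - dropSum S p ≤ -1 := by nlinarith
      have : -1 ≤ c - dropSum S p := by nlinarith
      omega
  refine ⟨p, hp, hpn, hpS, ?_⟩
  have hsq : (flipSign S p : R) ^ 2 = 1 := by
    rcases flipSign_eq_one_or (S := S) p with h | h <;> simp [h]
  have hf : (flipSign S p : R) * W p = flipSign S p := by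
    rw [hW.flipSign_mul hp hpn.le, hw, ← hfp_eq]
    push_cast
    ring
  linear_combination (flipSign S p : R) * hf - (W p - 1) * hsq

end Walk

section Height

variable {N : ℕ} {lam : ℕ → ℂ} {ν : ℂ}

def height (N : ℕ) (lam : ℕ → ℂ) (p : ℕ) : ℂ := 2 * ∑ l ∈ Ico p N, lam l + ((N : ℂ) - p)

def flipSum (N : ℕ) (lam : ℕ → ℂ) (p : ℕ) : ℂ := height N lam p + height N lam (p + 1)

/-- For odd `s` this is `2 (h_1 - ν)`, for even `s` it is `2 (h_1 + 1)`. -/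
def defect (N : ℕ) (lam : ℕ → ℂ) (ν : ℂ) (s : ℕ) : ℂ :=
  2 * height N lam 1 + (-1) ^ s + 1 - (1 - (-1) ^ s) * ν

theorem height_self : height N lam N = 0 := by
  simp [height]

theorem height_eq_succ {p : ℕ} (hp : p < N) :
    height N lam p = height N lam (p + 1) + 2 * lam p + 1 := by
  rw [height, height, sum_eq_sum_Ico_succ_bot hp]
  push_cast
  ring

theorem height_eq_add_of_eq_zero {a b : ℕ} (hab : a ≤ b) (hb : b ≤ N)
    (h : ∀ l, a ≤ l → l < b → lam l = 0) : height N lam a = height N lam b + (b - a) := by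
  rw [height, height, ← sum_Ico_consecutive _ hab hb,
    sum_eq_zero fun l hl => h l (mem_Ico.1 hl).1 (mem_Ico.1 hl).2]
  ring

theorem height_add_one {p : ℕ} (hp : p ≤ N) :
    height (N + 1) lam p = height N lam p + 2 * lam N + 1 := by
  rw [height, height, sum_Ico_succ_top hp]
  push_cast
  ring

theorem sum_height (hN : 1 ≤ N) :
    ∑ p ∈ Icc 1 N, height N lam p = 2 * ∑ l ∈ Ico 1 N, l * lam l + N * (N - 1) / 2 := by
  induction N, hN using Nat.le_induction with
  | base => simp [height]
  | succ N hN ih =>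
    rw [sum_Icc_succ_top (by omega), height_self, sum_Ico_succ_top hN,
      sum_congr rfl fun p hp => height_add_one (mem_Icc.1 hp).2, sum_add_distrib, sum_add_distrib,
      ih]
    simp only [sum_const, Nat.card_Icc, nsmul_eq_mul, Nat.add_sub_cancel]
    push_cast
    ring

theorem isFlipDropWalk_of_flipSum {S : Finset ℕ} (hflip : ∀ p ∈ S, flipSum N lam p = ν)
    (hdrop : ∀ p, 1 ≤ p → p < N → p ∉ S → lam p = 0) :
    IsFlipDropWalk S N fun p => 2 * height N lam p - ν := by
  intro p hp hpN
  split_ifs with hpS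
  · rw [← hflip p hpS, flipSum]
    ring
  · linear_combination -2 * height_eq_succ (lam := lam) hpN - 4 * hdrop p hp hpN hpS

theorem defect_mul_defect_succ (hN : 1 ≤ N)
    (hflip : ∀ p, 1 ≤ p → p < N → lam p ≠ 0 → flipSum N lam p = ν) (s : ℕ) :
    defect N lam ν s * defect N lam ν (s + 1) =
      8 * ∑ p ∈ Icc 1 N, height N lam p - 4 * N * ν := by
  classical
  have hW := isFlipDropWalk_of_flipSum (S := {p ∈ Ico 1 N | lam p ≠ 0}) (lam := lam) (ν := ν)
    (fun p hp => by simp only [mem_filter, mem_Ico] at hp; exact hflip p hp.1.1 hp.1.2 hp.2)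
    (fun p hp hpN hpS => by simpa [hp, hpN] using hpS)
  have hsum := hW.four_mul_sum_Icc hN
  simp only [sum_sub_distrib, ← mul_sum, sum_const, Nat.card_Icc, Nat.add_sub_cancel, nsmul_eq_mul,
    height_self] at hsum
  simp only [defect, pow_succ]
  linear_combination -hsum - (1 + ν) ^ 2 * neg_one_pow_sq (M := ℂ) s

theorem exists_odd_of_defect {D : ℤ} {s : ℕ} (hpar : Odd (D + s))
    (hend : (-1) ^ s * -ν = 2 * height N lam 1 - ν - 2 * D)
    (hne : defect N lam ν s ≠ 0) (hsucc : defect N lam ν (s + 1) = 0) :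
    ∃ w : ℤ, 2 * height N lam 1 - ν = w ∧ Odd w ∧ w * (w - 2 * D) < 0 := by
  rw [defect] at hne hsucc
  rw [Int.odd_iff] at hpar
  rcases Nat.even_or_odd s with hs | hs
  · rw [hs.neg_one_pow, hs.add_one.neg_one_pow] at *
    rw [Nat.even_iff] at hs
    have hD : D % 2 = 1 := by omega
    refine ⟨D, by linear_combination hsucc / 2 - hend / 2, Int.odd_iff.2 hD, ?_⟩
    nlinarith [sq_pos_of_ne_zero (show D ≠ 0 by omega)]
  · rw [hs.neg_one_pow, hs.add_one.neg_one_pow] at *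
    rw [Nat.odd_iff] at hs
    obtain ⟨k, rfl⟩ : ∃ k, D = 2 * k := ⟨D / 2, by omega⟩
    push_cast at hend
    have hk : k ≠ 0 := by
      rintro rfl
      exact hne (by push_cast at hend; linear_combination -hend)
    refine ⟨2 * k - 1, by push_cast; linear_combination hsucc / 2 - hend / 2,
      Int.odd_iff.2 (by omega), ?_⟩
    nlinarith [sq_pos_of_ne_zero hk]

theorem exists_flipSum_eq_of_defect {m : ℕ} (hm : 0 < m) {S : Finset ℕ} (hS : S ⊆ Ico 1 (2 * m))
    (hflip : ∀ p ∈ S, flipSum (2 * m) lam p = ν)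
    (hdrop : ∀ p, 1 ≤ p → p < 2 * m → p ∉ S → lam p = 0)
    (hne : defect (2 * m) lam ν #S ≠ 0) (hsucc : defect (2 * m) lam ν (#S + 1) = 0) :
    ∃ p, 1 ≤ p ∧ p < 2 * m ∧ p ∉ S ∧ flipSum (2 * m) lam p = ν := by
  have hW := isFlipDropWalk_of_flipSum hflip hdrop
  have hend := hW.flipSign_mul (p := 2 * m) (by omega) le_rfl
  have hpar := dropSum_add_flipCount_modEq (S := S) (p := 2 * m) (by omega)
  simp only [flipSign, flipCount_of_subset hS, height_self] at hend hpar
  push_cast at hend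
  obtain ⟨w, hw, hodd, hsign⟩ := exists_odd_of_defect (D := dropSum S (2 * m))
    (Int.odd_iff.2 (by rw [Int.ModEq] at hpar; omega)) (by linear_combination hend) hne hsucc
  obtain ⟨p, hp, hpN, hpS, hWp⟩ := hW.exists_eq_one hw hodd hsign
  refine ⟨p, hp, hpN, hpS, ?_⟩
  rw [flipSum]
  linear_combination hWp - height_eq_succ (lam := lam) hpN - 2 * hdrop p hp hpN hpS

end Height

section Line

/-- The constant `c_j` of the statement (`lineConst_eq`), extended by `c_1 = 0`. -/
def lineConst (x : ℕ → ℂ) (j : ℕ) : ℂ :=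
  -x 1 - 2 * ∑ k ∈ Icc 1 j, (-1) ^ k * x k + (-1) ^ j * x j

theorem lineConst_succ (x : ℕ → ℂ) (j : ℕ) :
    lineConst x (j + 1) = lineConst x j + (-1) ^ j * (x (j + 1) - x j) := by
  rw [lineConst, lineConst, sum_Icc_succ_top (by omega)]
  ring

theorem lineConst_one (x : ℕ → ℂ) : lineConst x 1 = 0 := by
  simp [lineConst]
  ring

theorem lineConst_eq (x : ℕ → ℂ) {j : ℕ} (hj : 2 ≤ j) :
    lineConst x j = x 1 + 2 * ∑ k ∈ Ico 2 j, (-1) ^ (k + 1) * x k + (-1) ^ (j + 1) * x j := by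
  rw [lineConst, ← Ico_add_one_right_eq_Icc, sum_eq_sum_Ico_succ_bot (by omega),
    sum_Ico_succ_top hj]
  simp only [pow_succ, neg_mul, mul_neg, mul_one, sum_neg_distrib]
  ring

theorem forall_add_eq_sub_iff (a x : ℕ → ℂ) (s : ℕ) :
    (∀ k, 1 ≤ k → k < s → a k + a (k + 1) = x k - x (k + 1)) ↔
      ∀ j, 1 ≤ j → j ≤ s → a j = (-1) ^ j * (lineConst x j - a 1) := by
  constructor
  · intro hrec j hj hjs
    induction j, hj using Nat.le_induction with
    | base => rw [lineConst_one]; ring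
    | succ j hj ih =>
      rw [lineConst_succ, pow_succ]
      linear_combination
        hrec j hj hjs - ih (by omega) + (x (j + 1) - x j) * neg_one_pow_sq (M := ℂ) j
  · intro hform k hk hks
    rw [hform k hk hks.le, hform (k + 1) (by omega) hks, lineConst_succ, pow_succ]
    linear_combination (x k - x (k + 1)) * neg_one_pow_sq (M := ℂ) k

end Line

structure IsChain (N s : ℕ) (ii : ℕ → ℕ) (lam : ℕ → ℂ) : Prop where
  bounds : ∀ k, 1 ≤ k → k ≤ s → 1 ≤ ii k ∧ ii k ≤ N - 1
  strictMono : ∀ k l, 1 ≤ k → k < l → l ≤ s → ii k < ii l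
  support : ∀ k, 1 ≤ k → k ≤ N - 1 → (∀ j, 1 ≤ j → j ≤ s → ii j ≠ k) → lam k = 0

namespace IsChain

variable {N s : ℕ} {ii : ℕ → ℕ} {lam : ℕ → ℂ} {ν : ℂ}

theorem monotone (hc : IsChain N s ii lam) {k l : ℕ} (hk : 1 ≤ k) (hkl : k ≤ l) (hl : l ≤ s) :
    ii k ≤ ii l := by
  rcases hkl.eq_or_lt with rfl | hkl
  · rfl
  · exact (hc.strictMono k l hk hkl hl).le

theorem exists_eq_of_ne_zero (hc : IsChain N s ii lam) {p : ℕ} (hp : 1 ≤ p) (hpN : p ≤ N - 1)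
    (hlam : lam p ≠ 0) : ∃ k, 1 ≤ k ∧ k ≤ s ∧ ii k = p := by
  by_contra! h
  exact hlam (hc.support p hp hpN h)

theorem height_one (hc : IsChain N s ii lam) (hs : 1 ≤ s) :
    height N lam 1 = height N lam (ii 1) + (ii 1 - 1) := by
  have h1 := hc.bounds 1 le_rfl hs
  rw [height_eq_add_of_eq_zero h1.1 (by omega) fun l hl hl1 => hc.support l hl (by omega)
    fun j hj hjs => (hl1.trans_le (hc.monotone le_rfl hj hjs)).ne']
  push_cast
  ring

theorem height_succ_last (hc : IsChain N s ii lam) (hs : 1 ≤ s) :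
    height N lam (ii s + 1) = N - 1 - ii s := by
  have hs' := hc.bounds s hs le_rfl
  rw [height_eq_add_of_eq_zero (b := N) (by omega) le_rfl fun l hl hlN => hc.support l (by omega)
    (by omega) fun j hj hjs => ((hc.monotone hj hjs le_rfl).trans_lt hl).ne, height_self]
  push_cast
  ring

theorem flipSum_sub_flipSum_succ (hc : IsChain N s ii lam) {k : ℕ} (hk : 1 ≤ k) (hks : k < s) :
    flipSum N lam (ii k) - flipSum N lam (ii (k + 1)) =
      2 * (lam (ii k) + lam (ii (k + 1)) + (ii (k + 1) - ii k)) := by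
  have hk' := hc.bounds k hk hks.le
  have hk1 := hc.bounds (k + 1) (by omega) hks
  have hlt := hc.strictMono k (k + 1) hk (by omega) hks
  have hgap := height_eq_add_of_eq_zero (N := N) (lam := lam) (a := ii k + 1) (b := ii (k + 1))
    (by omega) (by omega) fun l hl hl1 => hc.support l (by omega) (by omega) fun j hj hjs => by
      rcases le_or_gt j k with hjk | hjk
      · exact ((hc.monotone hj hjk hks.le).trans_lt hl).ne
      · exact (hl1.trans_le (hc.monotone (by omega) hjk hjs)).ne'
  rw [flipSum, flipSum, height_eq_succ (p := ii k) (by omega), hgap,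
    height_eq_succ (p := ii (k + 1)) (by omega)]
  push_cast
  ring

theorem flipSum_eq_iff (hc : IsChain N s ii lam) :
    (∀ k, 1 ≤ k → k ≤ s → flipSum N lam (ii k) = flipSum N lam (ii 1)) ↔
      ∀ j, 1 ≤ j → j ≤ s → lam (ii j) = (-1) ^ j * (lineConst (fun k => ii k) j - lam (ii 1)) := by
  rw [← forall_add_eq_sub_iff]
  constructor
  · intro h k hk hks
    have := hc.flipSum_sub_flipSum_succ hk hks
    rw [h k hk hks.le, h (k + 1) (by omega) hks] at this
    linear_combination -this / 2
  · intro hrec k hk hks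
    induction k, hk using Nat.le_induction with
    | base => rfl
    | succ k hk ih =>
      linear_combination ih (by omega) - hc.flipSum_sub_flipSum_succ hk hks -
        2 * hrec k hk hks

theorem defect_eq (hc : IsChain N s ii lam) (hs : 1 ≤ s)
    (hflip : ∀ k, 1 ≤ k → k ≤ s → flipSum N lam (ii k) = ν) :
    defect N lam ν s = 2 * ((-1) ^ s * N - 2 * ∑ k ∈ Icc 1 s, (-1) ^ k * (ii k : ℂ)) := by
  have hform := hc.flipSum_eq_iff.mp fun k hk hks => (hflip k hk hks).trans (hflip 1 le_rfl hs).symm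
  have h1 := hc.bounds 1 le_rfl hs
  have hs' := hc.bounds s hs le_rfl
  have hfirst := hflip 1 le_rfl hs
  have hlast := hflip s hs le_rfl
  rw [flipSum, height_eq_succ (p := ii 1) (by omega)] at hfirst
  rw [flipSum, height_eq_succ (p := ii s) (by omega), hc.height_succ_last hs, hform s hs le_rfl,
    lineConst] at hlast
  rw [defect, hc.height_one hs, height_eq_succ (p := ii 1) (by omega)]
  linear_combination hfirst - (-1) ^ s * hlast +
    2 * ((-1) ^ s * ii s - ii 1 - 2 * ∑ k ∈ Icc 1 s, (-1) ^ k * (ii k : ℂ) - lam (ii 1)) *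
      neg_one_pow_sq (M := ℂ) s

end IsChain

section Solutions

variable {N : ℕ} {lam : ℕ → ℂ} {ν : ℂ}

theorem exists_flipSet {m : ℕ} (hm : 0 < m)
    (hflip : ∀ p, 1 ≤ p → p < 2 * m → lam p ≠ 0 → flipSum (2 * m) lam p = ν)
    (hν : ∑ p ∈ Icc 1 (2 * m), height (2 * m) lam p = m * ν) :
    ∃ I ⊆ Ico 1 (2 * m), (∀ p, 1 ≤ p → p < 2 * m → lam p ≠ 0 → p ∈ I) ∧
      (∀ p ∈ I, flipSum (2 * m) lam p = ν) ∧ defect (2 * m) lam ν #I = 0 := by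
  classical
  set S : Finset ℕ := {p ∈ Ico 1 (2 * m) | lam p ≠ 0}
  have hS : S ⊆ Ico 1 (2 * m) := filter_subset _ _
  have hsupp : ∀ p, 1 ≤ p → p < 2 * m → lam p ≠ 0 → p ∈ S := fun p hp hpm hlam =>
    mem_filter.2 ⟨mem_Ico.2 ⟨hp, hpm⟩, hlam⟩
  have hSflip : ∀ p ∈ S, flipSum (2 * m) lam p = ν := fun p hpS => by
    obtain ⟨hp, hlam⟩ := mem_filter.1 hpS
    exact hflip p (mem_Ico.1 hp).1 (mem_Ico.1 hp).2 hlam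
  have hdrop : ∀ p, 1 ≤ p → p < 2 * m → p ∉ S → lam p = 0 := fun p hp hpm hpS => by
    by_contra hlam
    exact hpS (hsupp p hp hpm hlam)
  have hprod : defect (2 * m) lam ν #S * defect (2 * m) lam ν (#S + 1) = 0 := by
    rw [defect_mul_defect_succ (by omega) hflip]
    push_cast
    linear_combination 8 * hν
  by_cases h0 : defect (2 * m) lam ν #S = 0
  · exact ⟨S, hS, hsupp, hSflip, h0⟩
  have hsucc := (mul_eq_zero.1 hprod).resolve_left h0
  obtain ⟨p, hp, hpm, hpS, hpflip⟩ := exists_flipSum_eq_of_defect hm hS hSflip hdrop h0 hsucc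
  refine ⟨insert p S, insert_subset (mem_Ico.2 ⟨hp, hpm⟩) hS,
    fun q hq hqm hlam => mem_insert_of_mem (hsupp q hq hqm hlam), fun q hq => ?_,
    by rwa [card_insert_of_notMem hpS]⟩
  rcases mem_insert.1 hq with rfl | hq
  exacts [hpflip, hSflip q hq]

theorem exists_isChain_of_flipSet (hN : 1 ≤ N) {I : Finset ℕ} (hI : I ⊆ Ico 1 N)
    (hsupp : ∀ p, 1 ≤ p → p < N → lam p ≠ 0 → p ∈ I) (hflip : ∀ p ∈ I, flipSum N lam p = ν)
    (hdef : defect N lam ν #I = 0) :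
    ∃ s, 1 ≤ s ∧ s ≤ N - 1 ∧ ∃ ii : ℕ → ℕ, IsChain N s ii lam ∧
      2 * ∑ k ∈ Icc 1 s, (-1) ^ k * (ii k : ℂ) = (-1) ^ s * N ∧
      ∀ j, 1 ≤ j → j ≤ s → lam (ii j) = (-1) ^ j * (lineConst (fun k => ii k) j - lam (ii 1)) := by
  obtain ⟨ii, hmem, hmono, hsurj⟩ := exists_increasing_enum I
  have hc : IsChain N #I ii lam := by
    refine ⟨fun k hk hkI => ?_, hmono, fun p hp hpN hne => ?_⟩
    · have := mem_Ico.1 (hI (hmem k hk hkI)); omega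
    · by_contra hlam
      obtain ⟨k, hk, hkI, rfl⟩ := hsurj p (hsupp p hp (by omega) hlam)
      exact hne k hk hkI rfl
  have hs : 1 ≤ #I := by
    refine card_pos.2 (nonempty_iff_ne_empty.2 fun hI0 => ?_)
    have h1 := height_eq_add_of_eq_zero (lam := lam) hN le_rfl fun p hp hpN => by
      by_contra hlam
      simpa [hI0] using hsupp p hp hpN hlam
    rw [defect, hI0, card_empty, h1, height_self] at hdef
    have : (N : ℂ) = 0 := by linear_combination hdef / 2
    norm_cast at this
    omega
  have hflip' : ∀ k, 1 ≤ k → k ≤ #I → flipSum N lam (ii k) = ν := fun k hk hkI =>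
    hflip _ (hmem k hk hkI)
  refine ⟨#I, hs, (card_le_card hI).trans (by simp), ii, hc, ?_,
    hc.flipSum_eq_iff.1 fun k hk hkI => (hflip' k hk hkI).trans (hflip' 1 le_rfl hs).symm⟩
  linear_combination -(hc.defect_eq hs hflip').symm.trans hdef / 2

end Solutions

section QHat

variable {m : ℕ} {lam : ℕ → ℂ}

def qHat (m : ℕ) (lam : ℕ → ℂ) (i : ℕ) : ℂ :=
  -(1 / (m : ℂ)) * (∑ j ∈ Finset.Ico 1 i, (j : ℂ) * lam j) +
    (((m : ℂ) - (i : ℂ)) / (m : ℂ)) * lam i +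
    (1 / (m : ℂ)) * (∑ j ∈ Finset.Ico (i + 1) (2 * m), ((2 * (m : ℂ)) - (j : ℂ)) * lam j) +
    ((m : ℂ) - (i : ℂ))

theorem two_mul_qHat (hm : 0 < m) {p : ℕ} (hp : 1 ≤ p) (hpm : p < 2 * m) :
    2 * m * qHat m lam p =
      m * flipSum (2 * m) lam p - ∑ q ∈ Icc 1 (2 * m), height (2 * m) lam q := by
  have hm0 : (m : ℂ) ≠ 0 := by exact_mod_cast hm.ne'
  rw [sum_height (by omega), ← sum_Ico_consecutive _ hp hpm.le, sum_eq_sum_Ico_succ_bot hpm,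
    flipSum, height_eq_succ hpm, height, qHat]
  simp only [sub_mul, sum_sub_distrib, ← mul_sum]
  field_simp
  push_cast
  ring

theorem exists_isChain_of_mul_qHat_eq_zero (hm : 0 < m)
    (h : ∀ i, 1 ≤ i → i ≤ 2 * m - 1 → lam i * qHat m lam i = 0) :
    ∃ s, 1 ≤ s ∧ s ≤ 2 * m - 1 ∧ ∃ ii : ℕ → ℕ, IsChain (2 * m) s ii lam ∧
      ∑ k ∈ Icc 1 s, (-1 : ℤ) ^ k * (ii k : ℤ) = (-1) ^ s * m ∧
      ∀ j, 1 ≤ j → j ≤ s → lam (ii j) = (-1) ^ j * (lineConst (fun k => ii k) j - lam (ii 1)) := by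
  have hm0 : (m : ℂ) ≠ 0 := by exact_mod_cast hm.ne'
  set ν := (∑ q ∈ Icc 1 (2 * m), height (2 * m) lam q) / m with hν
  have hflip : ∀ p, 1 ≤ p → p < 2 * m → lam p ≠ 0 → flipSum (2 * m) lam p = ν := by
    intro p hp hpm hlam
    have hq := (mul_eq_zero.1 (h p hp (by omega))).resolve_left hlam
    have := two_mul_qHat (lam := lam) hm hp hpm
    rw [hq, mul_zero] at this
    rw [hν, eq_div_iff hm0]
    linear_combination -this
  obtain ⟨I, hI, hsupp, hIflip, hdef⟩ := exists_flipSet hm hflip (by rw [hν]; field_simp)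
  obtain ⟨s, hs, hsm, ii, hc, hsign, hform⟩ :=
    exists_isChain_of_flipSet (by omega) hI hsupp hIflip hdef
  refine ⟨s, hs, hsm, ii, hc, ?_, hform⟩
  have : ∑ k ∈ Icc 1 s, (-1) ^ k * (ii k : ℂ) = (-1) ^ s * m := by
    push_cast at hsign
    linear_combination hsign / 2
  exact_mod_cast this

theorem IsChain.mul_qHat_eq_zero (hm : 0 < m) {s : ℕ} {ii : ℕ → ℕ} (hc : IsChain (2 * m) s ii lam)
    (hs : 1 ≤ s) (hsign : ∑ k ∈ Icc 1 s, (-1 : ℤ) ^ k * (ii k : ℤ) = (-1) ^ s * m)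
    (hform : ∀ j, 1 ≤ j → j ≤ s →
      lam (ii j) = (-1) ^ j * (lineConst (fun k => ii k) j - lam (ii 1))) :
    ∀ i, 1 ≤ i → i ≤ 2 * m - 1 → lam i * qHat m lam i = 0 := by
  have hm0 : (m : ℂ) ≠ 0 := by exact_mod_cast hm.ne'
  set ν := flipSum (2 * m) lam (ii 1)
  have hchain := hc.flipSum_eq_iff.2 hform
  have hflip : ∀ p, 1 ≤ p → p < 2 * m → lam p ≠ 0 → flipSum (2 * m) lam p = ν := by
    intro p hp hpm hlam
    obtain ⟨k, hk, hks, rfl⟩ := hc.exists_eq_of_ne_zero hp (by omega) hlam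
    exact hchain k hk hks
  have hdef : defect (2 * m) lam ν s = 0 := by
    have hsignC : ∑ k ∈ Icc 1 s, (-1) ^ k * (ii k : ℂ) = (-1) ^ s * m := by exact_mod_cast hsign
    rw [hc.defect_eq hs hchain, hsignC]
    push_cast
    ring
  have hsum := defect_mul_defect_succ (by omega) hflip s
  rw [hdef, zero_mul] at hsum
  intro i hi him
  by_cases hlam : lam i = 0
  · rw [hlam, zero_mul]
  have := two_mul_qHat (lam := lam) hm hi (by omega)
  rw [hflip i hi (by omega) hlam] at this
  have hq : qHat m lam i = 0 := by
    have h2 : (2 * m : ℂ) * qHat m lam i = 0 := by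
      push_cast at hsum
      linear_combination this + hsum / 8
    simpa [hm0] using h2
  rw [hq, mul_zero]

end QHat

end ZhuVariety

open ZhuVariety

theorem stmt_11 (m : ℕ) (hm : 2 ≤ m)
    (lam : ℕ → ℂ)
    -- `q̂_i(λ)`
    (qhat : ℕ → ℂ)
    (hq : ∀ i : ℕ, qhat i =
      -(1 / (m : ℂ)) * (∑ j ∈ Finset.Ico 1 i, (j : ℂ) * lam j) +
      (((m : ℂ) - (i : ℂ)) / (m : ℂ)) * lam i +
      (1 / (m : ℂ)) * (∑ j ∈ Finset.Ico (i + 1) (2 * m), ((2 * (m : ℂ)) - (j : ℂ)) * lam j) +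
      ((m : ℂ) - (i : ℂ))) :
    -- `λ_i · q̂_i(λ) = 0` for all `i = 1, …, 2m−1`  ↔  `λ` lies on one of the lines of `Ξ̂`
    (∀ i : ℕ, 1 ≤ i → i ≤ 2 * m - 1 → lam i * qhat i = 0) ↔
    (∃ s : ℕ, 1 ≤ s ∧ s ≤ 2 * m - 1 ∧
      ∃ ii : ℕ → ℕ,
        (∀ k : ℕ, 1 ≤ k → k ≤ s → 1 ≤ ii k ∧ ii k ≤ 2 * m - 1) ∧
        (∀ k l : ℕ, 1 ≤ k → k < l → l ≤ s → ii k < ii l) ∧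
        (∑ k ∈ Finset.Icc 1 s, (-1 : ℤ) ^ k * (ii k : ℤ)) = (-1 : ℤ) ^ s * (m : ℤ) ∧
        ∃ t : ℂ,
          lam (ii 1) = t ∧
          (∀ j : ℕ, 2 ≤ j → j ≤ s → lam (ii j) =
            (-1 : ℂ) ^ j *
              (((ii 1 : ℂ) + 2 * (∑ k ∈ Finset.Ico 2 j, (-1 : ℂ) ^ (k + 1) * (ii k : ℂ)) +
                (-1 : ℂ) ^ (j + 1) * (ii j : ℂ)) - t)) ∧
          (∀ k : ℕ, 1 ≤ k → k ≤ 2 * m - 1 →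
            (∀ j : ℕ, 1 ≤ j → j ≤ s → ii j ≠ k) → lam k = 0)) := by
  obtain rfl : qhat = qHat m lam := funext hq
  constructor
  · intro h
    obtain ⟨s, hs, hsm, ii, hc, hsign, hform⟩ := exists_isChain_of_mul_qHat_eq_zero (by omega) h
    refine ⟨s, hs, hsm, ii, hc.bounds, hc.strictMono, hsign, _, rfl, fun j hj hjs => ?_, hc.support⟩
    rw [hform j (by omega) hjs, lineConst_eq _ hj]
  · rintro ⟨s, hs, -, ii, hbounds, hmono, hsign, t, rfl, hform, hsupp⟩
    refine IsChain.mul_qHat_eq_zero (by omega) ⟨hbounds, hmono, hsupp⟩ hs hsign fun j hj hjs => ?_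
    rcases hj.eq_or_lt with rfl | hj
    · rw [lineConst_one]
      ring
    · rw [lineConst_eq _ hj]
      exact hform j hj hjs
end
end

section
/- Let m ≥ 2, let s ∈ {1, …, 2m−2}, and let 1 ≤ i_1 < ⋯ < i_s ≤ 2m−1 be integers with Σ_{k=1}^{s}(−1)^k·i_k ≠ (−1)^s·m. Then there exists j ∈ {1, …, 2m−1} ∖ {i_1, …, i_s} such that, writing i′_1 < ⋯ < i′_{s+1} for the increasing rearrangement of i_1, …, i_s, j, one has Σ_{k=1}^{s+1}(−1)^k·i′_k = (−1)^{s+1}·m. -/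
/-!
Inserting `t` into `i_1 < ⋯ < i_s` at its place gives an alternating sum `W t`
(`insertionSum`), defined for every `t`. The values `W 0 = -A` and `W (2m) = A + (-1)^(s+1) 2m`,
where `A` is the alternating sum of the `i_k`, average to the target `(-1)^(s+1) m`, which by
hypothesis is not `W 0`. Moreover `W` moves by `±1` at each step, and it backtracks at each
`i_k`: `W (i_k + 1) = W (i_k - 1)`. Hence the walk crosses the target level for the last time
at a point `j` that is not one of the `i_k`, and `W j` is the alternating sum of the lengthened
sequence.
-/

open Finset

lemma exists_eq_notMem_of_lt_of_lt (f : ℕ → ℤ) (T : Set ℕ) {M : ℤ} {N : ℕ}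
    (hstep : ∀ t, |f (t + 1) - f t| ≤ 1) (hT : ∀ t, t + 1 ∈ T → f (t + 2) = f t)
    (h0 : f 0 < M) (hN : M < f N) : ∃ j, 1 ≤ j ∧ j < N ∧ j ∉ T ∧ f j = M := by
  -- `j` is the first index after the last visit strictly below `M`
  set t := Nat.findGreatest (fun t => f t < M) N
  have ht : f t < M := Nat.findGreatest_spec (P := fun t => f t < M) (Nat.zero_le N) h0
  have htN : t < N := (Nat.findGreatest_le N).lt_of_ne fun h => lt_asymm hN (h ▸ ht)
  have hge : ∀ u, t < u → u ≤ N → M ≤ f u := fun u hu huN =>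
    not_lt.1 (Nat.findGreatest_is_greatest hu huN)
  have hft : f (t + 1) = M := by
    have h₁ : M ≤ f (t + 1) := hge _ (by omega) htN
    have h₂ := (abs_le.1 (hstep t)).2
    omega
  have htN' : t + 1 < N := (Nat.succ_le_of_lt htN).lt_of_ne fun h => hN.ne' (h ▸ hft)
  refine ⟨t + 1, by omega, htN', fun hT' => ?_, hft⟩
  have := hge (t + 2) (by omega) htN'
  rw [hT t hT'] at this
  omega

lemma exists_eq_notMem_of_mem_uIoo (f : ℕ → ℤ) (T : Set ℕ) {M : ℤ} {N : ℕ}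
    (hstep : ∀ t, |f (t + 1) - f t| ≤ 1) (hT : ∀ t, t + 1 ∈ T → f (t + 2) = f t)
    (hM : M ∈ Set.uIoo (f 0) (f N)) : ∃ j, 1 ≤ j ∧ j < N ∧ j ∉ T ∧ f j = M := by
  rcases le_total (f 0) (f N) with h | h
  · rw [Set.uIoo_of_le h] at hM
    exact exists_eq_notMem_of_lt_of_lt f T hstep hT hM.1 hM.2
  · rw [Set.uIoo_of_ge h] at hM
    obtain ⟨j, hj1, hjN, hjT, hj⟩ := exists_eq_notMem_of_lt_of_lt (-f) T (M := -M)
      (fun t => by simpa only [Pi.neg_apply, neg_sub_neg, abs_sub_comm] using hstep t)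
      (fun t ht => by simp only [Pi.neg_apply, hT t ht]) (neg_lt_neg hM.2) (neg_lt_neg hM.1)
    exact ⟨j, hj1, hjN, hjT, neg_inj.1 hj⟩

namespace AltSumInsertion

variable (a : ℕ → ℕ)

def altSum (n : ℕ) : ℤ := ∑ k ∈ Icc 1 n, (-1 : ℤ) ^ k * (a k : ℤ)

def insertAt (c j : ℕ) : ℕ → ℕ :=
  fun k => if k ≤ c then a k else if k = c + 1 then j else a (k - 1)

def rank (s t : ℕ) : ℕ := #{k ∈ Icc 1 s | a k < t}

def insertionSum (s t : ℕ) : ℤ := altSum (insertAt a (rank a s t) t) (s + 1)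

variable {a}

lemma altSum_succ (n : ℕ) : altSum a (n + 1) = altSum a n + (-1) ^ (n + 1) * a (n + 1) :=
  sum_Icc_succ_top (by omega) _

lemma altSum_congr {b : ℕ → ℕ} {n : ℕ} (h : ∀ k ≤ n, a k = b k) :
    altSum a n = altSum b n :=
  sum_congr rfl fun k hk => by rw [h k (mem_Icc.1 hk).2]

lemma insertAt_of_le {c j k : ℕ} (h : k ≤ c) : insertAt a c j k = a k := if_pos h

lemma insertAt_succ (c j : ℕ) : insertAt a c j (c + 1) = j := by simp [insertAt]

lemma insertAt_of_lt {c j k : ℕ} (h : c + 1 < k) : insertAt a c j k = a (k - 1) := by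
  simp [insertAt, show ¬k ≤ c by omega, show k ≠ c + 1 by omega]

lemma altSum_insertAt {c s : ℕ} (j : ℕ) (hcs : c ≤ s) :
    altSum (insertAt a c j) (s + 1) = 2 * altSum a c - altSum a s + (-1) ^ (c + 1) * j := by
  induction s, hcs using Nat.le_induction with
  | base =>
    rw [altSum_succ, insertAt_succ, altSum_congr fun k hk => insertAt_of_le hk]
    ring
  | succ s hcs ih =>
    rw [altSum_succ, ih, insertAt_of_lt (by omega), altSum_succ]
    simp only [Nat.add_sub_cancel]
    ring

lemma image_insertAt {c s : ℕ} (j : ℕ) (hcs : c ≤ s) :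
    (Icc 1 (s + 1)).image (insertAt a c j) = insert j ((Icc 1 s).image a) := by
  induction s, hcs using Nat.le_induction with
  | base =>
    rw [← insert_Icc_right_eq_Icc_add_one (by omega), image_insert, insertAt_succ,
      image_congr fun k hk => insertAt_of_le (mem_Icc.1 hk).2]
  | succ s hcs ih =>
    rw [← insert_Icc_right_eq_Icc_add_one (by omega), image_insert, ih, insertAt_of_lt (by omega),
      ← insert_Icc_right_eq_Icc_add_one (by omega), image_insert, Nat.add_sub_cancel, insert_comm]

lemma strictMonoOn_insertAt {c s j : ℕ} (ha : StrictMonoOn a (Set.Icc 1 s)) (hcs : c ≤ s)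
    (hlt : ∀ k ∈ Set.Icc 1 c, a k < j) (hgt : ∀ k ∈ Set.Icc (c + 1) s, j < a k) :
    StrictMonoOn (insertAt a c j) (Set.Icc 1 (s + 1)) := by
  refine strictMonoOn_of_lt_add_one Set.ordConnected_Icc fun k _ hk hk1 => ?_
  simp only [Set.mem_Icc] at hk hk1
  rcases lt_trichotomy k c with h | rfl | h
  · rw [insertAt_of_le h.le, insertAt_of_le (show k + 1 ≤ c from h)]
    exact ha ⟨hk.1, by omega⟩ ⟨by omega, by omega⟩ (by omega)
  · rw [insertAt_of_le le_rfl, insertAt_succ]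
    exact hlt k ⟨hk.1, le_rfl⟩
  · rcases (Nat.succ_le_of_lt h).eq_or_lt with rfl | h'
    · rw [insertAt_succ, insertAt_of_lt (by omega)]
      exact hgt _ ⟨by omega, by omega⟩
    · rw [insertAt_of_lt h', insertAt_of_lt (by omega)]
      exact ha ⟨by omega, by omega⟩ ⟨by omega, by omega⟩ (by omega)

lemma rank_le (s t : ℕ) : rank a s t ≤ s :=
  (card_filter_le _ _).trans (Nat.card_Icc 1 s).le

lemma rank_zero (s : ℕ) : rank a s 0 = 0 := by simp [rank]

lemma rank_of_forall_lt {s t : ℕ} (h : ∀ k ∈ Set.Icc 1 s, a k < t) : rank a s t = s := by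
  simp [rank, filter_true_of_mem fun k hk => h k (mem_Icc.1 hk)]

lemma rank_succ_of_forall_ne {s t : ℕ} (h : ∀ k ∈ Set.Icc 1 s, a k ≠ t) :
    rank a s (t + 1) = rank a s t := by
  refine congrArg card (filter_congr fun k hk => ?_)
  have := h k (mem_Icc.1 hk)
  omega

lemma insertionSum_eq (s t : ℕ) :
    insertionSum a s t =
      2 * altSum a (rank a s t) - altSum a s + (-1) ^ (rank a s t + 1) * t :=
  altSum_insertAt t (rank_le s t)

lemma insertionSum_zero (s : ℕ) : insertionSum a s 0 = -altSum a s := by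
  simp [insertionSum_eq, rank_zero, altSum]

lemma insertionSum_of_forall_lt {s t : ℕ} (h : ∀ k ∈ Set.Icc 1 s, a k < t) :
    insertionSum a s t = altSum a s + (-1) ^ (s + 1) * t := by
  rw [insertionSum_eq, rank_of_forall_lt h]
  ring

variable {s : ℕ} (ha : StrictMonoOn a (Set.Icc 1 s))
include ha

lemma le_rank_iff {k : ℕ} (hk : k ∈ Set.Icc 1 s) (t : ℕ) : k ≤ rank a s t ↔ a k < t := by
  constructor
  · intro hkt
    by_contra! htk
    have hsub : {l ∈ Icc 1 s | a l < t} ⊆ Icc 1 (k - 1) := fun l hl => by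
      rw [mem_filter, mem_Icc] at hl
      have : l < k := ha.lt_iff_lt ⟨hl.1.1, hl.1.2⟩ hk |>.1 (by omega)
      exact mem_Icc.2 ⟨hl.1.1, by omega⟩
    have : rank a s t ≤ k - 1 := (card_le_card hsub).trans (Nat.card_Icc 1 (k - 1)).le
    have := hk.1
    omega
  · intro hkt
    have hsub : Icc 1 k ⊆ {l ∈ Icc 1 s | a l < t} := fun l hl => by
      rw [mem_Icc] at hl
      have : a l ≤ a k := ha.le_iff_le ⟨hl.1, hl.2.trans hk.2⟩ hk |>.2 hl.2
      exact mem_filter.2 ⟨mem_Icc.2 ⟨hl.1, hl.2.trans hk.2⟩, by omega⟩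
    simpa [rank] using card_le_card hsub

lemma rank_of_eq {q t : ℕ} (hq : q ∈ Set.Icc 1 s) (hqt : a q = t) :
    rank a s t + 1 = q ∧ rank a s (t + 1) = q := by
  have ⟨hq1, hqs⟩ := hq
  have hlt : rank a s t < q := not_le.1 fun h => ((le_rank_iff ha hq t).1 h).ne hqt
  have hle : q - 1 ≤ rank a s t := by
    rcases hq1.eq_or_lt with rfl | h
    · exact Nat.zero_le _
    · exact (le_rank_iff ha ⟨by omega, by omega⟩ t).2
        (hqt ▸ ha ⟨by omega, by omega⟩ hq (by omega))
  refine ⟨by omega, le_antisymm ?_ ((le_rank_iff ha hq _).2 (by omega))⟩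
  by_contra! h
  have hr : rank a s (t + 1) ∈ Set.Icc 1 s := ⟨by omega, rank_le s _⟩
  have := (le_rank_iff ha hr _).1 le_rfl
  have := ha hq hr h
  omega

lemma insertionSum_succ_sub (t : ℕ) :
    insertionSum a s (t + 1) - insertionSum a s t = (-1) ^ (rank a s (t + 1) + 1) := by
  by_cases h : ∃ q ∈ Set.Icc 1 s, a q = t
  · obtain ⟨q, hq, hqt⟩ := h
    obtain ⟨h₀, h₁⟩ := rank_of_eq ha hq hqt
    rw [insertionSum_eq, insertionSum_eq, h₁, ← h₀, altSum_succ, h₀, hqt]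
    push_cast
    ring
  · push Not at h
    rw [insertionSum_eq, insertionSum_eq, rank_succ_of_forall_ne h]
    push_cast
    ring

lemma insertionSum_add_two {q t : ℕ} (hq : q ∈ Set.Icc 1 s) (hqt : a q = t + 1) :
    insertionSum a s (t + 2) = insertionSum a s t := by
  have h₂ := insertionSum_succ_sub ha (t + 1)
  have h₁ := insertionSum_succ_sub ha t
  obtain ⟨h₀, h₁'⟩ := rank_of_eq ha hq hqt
  rw [h₁', ← h₀, pow_succ] at h₂
  linarith

lemma strictMonoOn_insertAt_rank {j : ℕ} (hj : ∀ k ∈ Set.Icc 1 s, a k ≠ j) :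
    StrictMonoOn (insertAt a (rank a s j) j) (Set.Icc 1 (s + 1)) := by
  refine strictMonoOn_insertAt ha (rank_le s j) (fun k hk => ?_) (fun k hk => ?_)
  · exact (le_rank_iff ha ⟨hk.1, hk.2.trans (rank_le s j)⟩ j).1 hk.2
  · have ⟨hk1, hks⟩ := hk
    have hk' : k ∈ Set.Icc 1 s := ⟨by omega, hks⟩
    refine (hj k hk').symm.lt_of_le (not_lt.1 fun h => ?_)
    have := (le_rank_iff ha hk' j).2 h
    omega

end AltSumInsertion

open AltSumInsertion in
theorem stmt_12_general (m s : ℕ)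
    (ii : ℕ → ℕ)
    (hrange : ∀ k : ℕ, 1 ≤ k → k ≤ s → 1 ≤ ii k ∧ ii k ≤ 2 * m - 1)
    (hmono : ∀ k l : ℕ, 1 ≤ k → k < l → l ≤ s → ii k < ii l)
    (hsum : (∑ k ∈ Finset.Icc 1 s, (-1 : ℤ) ^ k * (ii k : ℤ)) ≠ (-1 : ℤ) ^ s * (m : ℤ)) :
    ∃ j : ℕ, 1 ≤ j ∧ j ≤ 2 * m - 1 ∧ (∀ k : ℕ, 1 ≤ k → k ≤ s → ii k ≠ j) ∧
      ∃ ii' : ℕ → ℕ,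
        -- `ii'` is the increasing rearrangement of `i_1, …, i_s, j`
        (∀ k l : ℕ, 1 ≤ k → k < l → l ≤ s + 1 → ii' k < ii' l) ∧
        (Finset.Icc 1 (s + 1)).image ii' = insert j ((Finset.Icc 1 s).image ii) ∧
        (∑ k ∈ Finset.Icc 1 (s + 1), (-1 : ℤ) ^ k * (ii' k : ℤ)) =
          (-1 : ℤ) ^ (s + 1) * (m : ℤ) := by
  have ha : StrictMonoOn ii (Set.Icc 1 s) := fun k hk l hl hkl => hmono k l hk.1 hkl hl.2
  have hN : insertionSum ii s (2 * m) = altSum ii s + (-1) ^ (s + 1) * (2 * m : ℕ) :=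
    insertionSum_of_forall_lt fun k hk => by
      have := hrange k hk.1 hk.2
      omega
  have hM : (-1) ^ (s + 1) * (m : ℤ) ∈
      Set.uIoo (insertionSum ii s 0) (insertionSum ii s (2 * m)) := by
    have hsum' : altSum ii s ≠ (-1) ^ s * m := hsum
    rw [insertionSum_zero, hN, pow_succ]
    push_cast
    rcases hsum'.lt_or_gt with h | h
    · exact Set.mem_uIoo_of_gt (by linarith) (by linarith)
    · exact Set.mem_uIoo_of_lt (by linarith) (by linarith)
  obtain ⟨j, hj1, hjN, hjT, hjM⟩ := exists_eq_notMem_of_mem_uIoo (insertionSum ii s)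
    {v | ∃ k ∈ Set.Icc 1 s, ii k = v}
    (fun t => by simp [insertionSum_succ_sub ha])
    (fun t ⟨q, hq, hqt⟩ => insertionSum_add_two ha hq hqt) hM
  have hj : ∀ k ∈ Set.Icc 1 s, ii k ≠ j := fun k hk hkj => hjT ⟨k, hk, hkj⟩
  refine ⟨j, hj1, by omega, fun k hk1 hks => hj k ⟨hk1, hks⟩, insertAt ii (rank ii s j) j,
    fun k l hk hkl hl => strictMonoOn_insertAt_rank ha hj ⟨hk, by omega⟩ ⟨by omega, hl⟩ hkl,
    image_insertAt j (rank_le s j), hjM⟩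

theorem stmt_12 (m s : ℕ) (hm : 2 ≤ m) (hs1 : 1 ≤ s) (hs2 : s ≤ 2 * m - 2)
    (ii : ℕ → ℕ)
    (hrange : ∀ k : ℕ, 1 ≤ k → k ≤ s → 1 ≤ ii k ∧ ii k ≤ 2 * m - 1)
    (hmono : ∀ k l : ℕ, 1 ≤ k → k < l → l ≤ s → ii k < ii l)
    (hsum : (∑ k ∈ Finset.Icc 1 s, (-1 : ℤ) ^ k * (ii k : ℤ)) ≠ (-1 : ℤ) ^ s * (m : ℤ)) :
    ∃ j : ℕ, 1 ≤ j ∧ j ≤ 2 * m - 1 ∧ (∀ k : ℕ, 1 ≤ k → k ≤ s → ii k ≠ j) ∧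
      ∃ ii' : ℕ → ℕ,
        -- `ii'` is the increasing rearrangement of `i_1, …, i_s, j`
        (∀ k l : ℕ, 1 ≤ k → k < l → l ≤ s + 1 → ii' k < ii' l) ∧
        (Finset.Icc 1 (s + 1)).image ii' = insert j ((Finset.Icc 1 s).image ii) ∧
        (∑ k ∈ Finset.Icc 1 (s + 1), (-1 : ℤ) ^ k * (ii' k : ℤ)) =
          (-1 : ℤ) ^ (s + 1) * (m : ℤ) :=
  stmt_12_general m s ii hrange hmono hsum
end

section
/- Let m ≥ 1, let s ∈ {1, …, 2m−1}, and let 1 ≤ i_1 < ⋯ < i_s ≤ 2m−1 be integers with Σ_{k=1}^{s}(−1)^k·i_k = (−1)^s·m. For 1 ≤ i ≤ 2m−1 let ϖ_i ∈ ℚ^{2m} be the vector whose first i coordinates equal 1 − i/(2m) and whose remaining 2m−i coordinates equal −i/(2m). Then every coordinate of the vector Σ_{j=1}^{s}(−1)^j·ϖ_{i_j} ∈ ℚ^{2m} equals 1/2 or −1/2, and exactly m coordinates equal 1/2. -/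
/-!
Fix a coordinate `k`. Since `i` is increasing, the indices `j` with `k < i_j` form a final segment
`{a, …, s}` of `{1, …, s}`, so the `k`-th coordinate of `Σ (-1)^j ϖ_{i_j}` is the alternating sum
`Σ_{j=a}^{s} (-1)^j = ((-1)^s + (-1)^a) / 2` minus `(Σ (-1)^j i_j) / 2m = (-1)^s / 2`, that is
`(-1)^a / 2`. Every `ϖ_i` has coordinate sum zero, hence so does the vector, and a vector with
entries `±1/2` summing to zero has exactly half of its entries equal to `1/2`.
-/

open Finset

theorem two_mul_sum_Icc_neg_one_pow {R : Type*} [CommRing R] {a : ℕ} :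
    ∀ {s : ℕ}, a ≤ s + 1 → 2 * ∑ j ∈ Icc a s, (-1 : R) ^ j = (-1) ^ s + (-1) ^ a
  | 0, h => by interval_cases a <;> norm_num
  | s + 1, h => by
    rcases h.lt_or_eq with h | rfl
    · rw [sum_Icc_succ_top (by omega), mul_add, two_mul_sum_Icc_neg_one_pow (by omega)]
      ring
    · simp [pow_succ]

theorem exists_filter_Icc_eq_Icc_of_monotoneOn {P : ℕ → Prop} [DecidablePred P] {s : ℕ}
    (hP : MonotoneOn P (Set.Icc 1 s)) : ∃ a ≤ s + 1, (Icc 1 s).filter P = Icc a s := by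
  have hex : ∃ a, 1 ≤ a ∧ (s < a ∨ P a) := ⟨s + 1, by omega, .inl (by omega)⟩
  refine ⟨Nat.find hex, Nat.find_min' hex ⟨by omega, .inl (by omega)⟩, ?_⟩
  obtain ⟨ha1, ha⟩ := Nat.find_spec hex
  ext j
  simp only [mem_filter, mem_Icc]
  constructor
  · rintro ⟨⟨hj1, hjs⟩, hj⟩
    exact ⟨Nat.find_min' hex ⟨hj1, .inr hj⟩, hjs⟩
  · rintro ⟨haj, hjs⟩
    have hPa : P (Nat.find hex) := ha.resolve_left (by omega)
    exact ⟨⟨ha1.trans haj, hjs⟩, hP ⟨ha1, by omega⟩ ⟨ha1.trans haj, hjs⟩ haj hPa⟩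

theorem two_mul_card_filter_eq_card_of_sum_eq_zero {ι K : Type*} [Fintype ι] [Field K]
    [CharZero K] [DecidableEq K] {f : ι → K} {c : K} (hc : c ≠ 0)
    (hf : ∀ k, f k = c ∨ f k = -c) (hsum : ∑ k, f k = 0) :
    2 * #{k | f k = c} = Fintype.card ι := by
  have hsplit : ∑ k, f k = c * #{k | f k = c} - c * #{k | f k ≠ c} := by
    rw [← sum_filter_add_sum_filter_not univ (fun k => f k = c), sub_eq_add_neg,
      sum_congr rfl fun k hk => (mem_filter.mp hk).2,
      sum_congr rfl fun k hk => (hf k).resolve_left (mem_filter.mp hk).2]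
    simp [mul_comm]
  have hcard : #{k | f k = c} = #{k | f k ≠ c} := by
    have : c * (#{k | f k = c} - #{k | f k ≠ c} : K) = 0 := by rw [mul_sub, ← hsplit, hsum]
    exact_mod_cast sub_eq_zero.mp ((mul_eq_zero.mp this).resolve_left hc)
  rw [← card_univ, ← card_filter_add_card_filter_not (s := univ) (fun k => f k = c), ← hcard,
    two_mul]

def fundamentalWeight (n i : ℕ) : Fin n → ℚ := fun k => (if (k : ℕ) < i then 1 else 0) - i / n

theorem sum_fundamentalWeight {n i : ℕ} (hi : i ≤ n) : ∑ k, fundamentalWeight n i k = 0 := by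
  have hcount : #{k : Fin n | (k : ℕ) < i} = i := by
    simpa [hi] using Fin.card_filter_val_lt (n := n) (m := i)
  rcases n.eq_zero_or_pos with rfl | hn
  · simp
  have hn' : (n : ℚ) ≠ 0 := by positivity
  simp [fundamentalWeight, sum_sub_distrib, hcount, mul_div_cancel₀, hn']

theorem sum_neg_one_pow_mul_fundamentalWeight_apply {n : ℕ} (t : Finset ℕ) (ii : ℕ → ℕ)
    (k : Fin n) :
    ∑ j ∈ t, (-1 : ℚ) ^ j * fundamentalWeight n (ii j) k =
      ∑ j ∈ t with (k : ℕ) < ii j, (-1 : ℚ) ^ j - (∑ j ∈ t, (-1 : ℚ) ^ j * ii j) / n := by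
  simp only [fundamentalWeight, mul_sub, sum_sub_distrib, mul_ite, mul_one, mul_zero,
    sum_ite, sum_const_zero, add_zero, sum_div, mul_div_assoc]

theorem stmt_13_general (m s : ℕ)
    (ii : ℕ → ℕ)
    (hrange : ∀ k : ℕ, 1 ≤ k → k ≤ s → 1 ≤ ii k ∧ ii k ≤ 2 * m - 1)
    (hmono : ∀ k l : ℕ, 1 ≤ k → k < l → l ≤ s → ii k < ii l)
    (hsum : (∑ k ∈ Finset.Icc 1 s, (-1 : ℤ) ^ k * (ii k : ℤ)) = (-1 : ℤ) ^ s * (m : ℤ))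
    -- `ϖ_i ∈ ℚ^{2m}`: first `i` coordinates equal `1 − i/(2m)`, the rest equal `−i/(2m)`
    (w : ℕ → Fin (2 * m) → ℚ)
    (hw : ∀ i : ℕ, w i = fun k : Fin (2 * m) => (if (k : ℕ) < i then 1 else 0) - (i : ℚ) / (2 * m))
    (v : Fin (2 * m) → ℚ)
    (hv : v = fun k => ∑ j ∈ Finset.Icc 1 s, (-1 : ℚ) ^ j * w (ii j) k) :
    (∀ k : Fin (2 * m), v k = 1 / 2 ∨ v k = -(1 / 2)) ∧
    (Finset.univ.filter fun k : Fin (2 * m) => v k = 1 / 2).card = m := by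
  obtain rfl : w = fundamentalWeight (2 * m) := by
    ext i k
    simp [hw, fundamentalWeight]
  have hsumQ : ∑ j ∈ Icc 1 s, (-1 : ℚ) ^ j * ii j = (-1) ^ s * m := by exact_mod_cast hsum
  have hii : MonotoneOn ii (Set.Icc 1 s) := fun j hj l hl hjl =>
    hjl.eq_or_lt.elim (fun h => h ▸ le_rfl) fun h => (hmono j l hj.1 h hl.2).le
  have hcoord (k : Fin (2 * m)) : ∃ a, v k = (-1) ^ a / 2 := by
    obtain ⟨a, has, hfilter⟩ := exists_filter_Icc_eq_Icc_of_monotoneOn (P := fun j => k < ii j)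
      fun j hj l hl hjl hkj => hkj.trans_le (hii hj hl hjl)
    have hm : (m : ℚ) ≠ 0 := Nat.cast_ne_zero.mpr (by have := k.pos; omega)
    refine ⟨a, ?_⟩
    simp only [hv, sum_neg_one_pow_mul_fundamentalWeight_apply, hfilter, hsumQ]
    push_cast
    field_simp
    linear_combination two_mul_sum_Icc_neg_one_pow (R := ℚ) has
  have hhalf (k : Fin (2 * m)) : v k = 1 / 2 ∨ v k = -(1 / 2) := by
    obtain ⟨a, ha⟩ := hcoord k
    rcases neg_one_pow_eq_or ℚ a with h | h <;> norm_num [ha, h]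
  have hvsum : ∑ k, v k = 0 := by
    rw [hv, sum_comm]
    refine sum_eq_zero fun j hj => ?_
    rw [← mul_sum, sum_fundamentalWeight, mul_zero]
    have := hrange j (mem_Icc.mp hj).1 (mem_Icc.mp hj).2
    omega
  have := two_mul_card_filter_eq_card_of_sum_eq_zero (by norm_num) hhalf hvsum
  rw [Fintype.card_fin] at this
  exact ⟨hhalf, by omega⟩

theorem stmt_13 (m s : ℕ) (hm : 1 ≤ m) (hs1 : 1 ≤ s) (hs2 : s ≤ 2 * m - 1)
    (ii : ℕ → ℕ)
    (hrange : ∀ k : ℕ, 1 ≤ k → k ≤ s → 1 ≤ ii k ∧ ii k ≤ 2 * m - 1)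
    (hmono : ∀ k l : ℕ, 1 ≤ k → k < l → l ≤ s → ii k < ii l)
    (hsum : (∑ k ∈ Finset.Icc 1 s, (-1 : ℤ) ^ k * (ii k : ℤ)) = (-1 : ℤ) ^ s * (m : ℤ))
    -- `ϖ_i ∈ ℚ^{2m}`: first `i` coordinates equal `1 − i/(2m)`, the rest equal `−i/(2m)`
    (w : ℕ → Fin (2 * m) → ℚ)
    (hw : ∀ i : ℕ, w i = fun k : Fin (2 * m) => (if (k : ℕ) < i then 1 else 0) - (i : ℚ) / (2 * m))
    (v : Fin (2 * m) → ℚ)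
    (hv : v = fun k => ∑ j ∈ Finset.Icc 1 s, (-1 : ℚ) ^ j * w (ii j) k) :
    (∀ k : Fin (2 * m), v k = 1 / 2 ∨ v k = -(1 / 2)) ∧
    (Finset.univ.filter fun k : Fin (2 * m) => v k = 1 / 2).card = m :=
  stmt_13_general m s ii hrange hmono hsum w hw v hv
end

section
/- Let m ≥ 2, let e = Σ_{i=1}^{m} E_{i,m+i} and f = Σ_{i=1}^{m} E_{m+i,i} in sl_{2m}(ℂ) (matrix units E_{i,j}), and let g^e = {Y ∈ sl_{2m}(ℂ) : [Y, e] = 0} be the centralizer of e. Let 𝒮 = f + g^e be the corresponding Slodowy slice, R the algebra of polynomial functions on 𝒮, and Ī ⊆ R the ideal generated by the restrictions to 𝒮 of the entries of the map X ↦ X² − (tr(X²)/2m)·I_{2m}. Then R/Ī is isomorphic as a ℂ-algebra to the polynomial ring ℂ[z] in one variable. -/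
/-!
A point of the slice has the block form `X = [[A, B], [1, A]]`, so
`X² = [[A² + B, AB + BA], [2A, A² + B]]`. Modulo `Ī` the matrix `X²` is the scalar
`τ = tr(X²)/2m`; its lower-left block then forces `A ≡ 0`, and its upper-left block `B ≡ τ·1`.
Hence `ℂ[𝒮]/Ī` is generated by `τ`. No polynomial relation holds for `τ`, because the points
`[[0, z·1], [1, 0]]` lie on the slice, satisfy `X² = z·1`, and so give characters of `ℂ[𝒮]/Ī`
sending `τ` to any `z ∈ ℂ`.
-/

open Matrix

noncomputable section

abbrev MatB (m : ℕ) := Matrix (Fin m ⊕ Fin m) (Fin m ⊕ Fin m) ℂ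

/-- The algebra of polynomial functions on a subset `S` of the space of square matrices:
the subalgebra of all functions `S → ℂ` generated by the matrix-entry coordinate
functions. -/
def funAlg (m : ℕ) (S : Set (MatB m)) : Subalgebra ℂ (↥S → ℂ) :=
  Algebra.adjoin ℂ {p | ∃ i j : Fin m ⊕ Fin m, p = fun X => X.1 i j}

open Polynomial in
theorem nonempty_algEquiv_polynomial_of_adjoin_eq_top {K A : Type*} [Field K] [Infinite K]
    [CommRing A] [Algebra K A] (a : A) (hgen : Algebra.adjoin K {a} = ⊤)
    (hchar : ∀ z : K, ∃ ψ : A →ₐ[K] K, ψ a = z) : Nonempty (A ≃ₐ[K] K[X]) := by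
  refine ⟨(AlgEquiv.ofBijective (aeval a) ⟨?_, ?_⟩).symm⟩
  · rw [injective_iff_map_eq_zero]
    intro p hp
    refine Polynomial.funext fun z => ?_
    obtain ⟨ψ, rfl⟩ := hchar z
    rw [eval_zero, ← coe_aeval_eq_eval, aeval_algHom_apply, hp, map_zero]
  · rw [← AlgHom.range_eq_top, ← Algebra.adjoin_singleton_eq_range_aeval, hgen]

namespace Matrix

variable {n R : Type*} [Fintype n] [DecidableEq n] [Ring R]

theorem fromBlocks_eq_of_mul_self_eq_smul_one (h2 : IsUnit (2 : R)) {a b : Matrix n n R}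
    {τ : R} (h : fromBlocks a b 1 a * fromBlocks a b 1 a = τ • 1) :
    fromBlocks a b 1 a = fromBlocks 0 (τ • 1) 1 0 := by
  rw [fromBlocks_multiply, ← fromBlocks_one, fromBlocks_smul, fromBlocks_inj] at h
  obtain ⟨h₁₁, -, h₂₁, -⟩ := h
  have ha : a = 0 := by
    rw [one_mul, mul_one, ← two_smul R a, smul_zero] at h₂₁
    exact h2.smul_left_cancel.mp (h₂₁.trans (smul_zero 2).symm)
  subst ha
  rw [mul_zero, zero_add, mul_one] at h₁₁
  rw [h₁₁]

end Matrix

def slodowySlice (m : ℕ) : Set (MatB m) :=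
  {X | ∃ Y : MatB m, Y.trace = 0 ∧ Y * fromBlocks 0 1 0 0 = fromBlocks 0 1 0 0 * Y ∧
    X = fromBlocks 0 0 1 0 + Y}

theorem toBlocks_of_mem_slodowySlice {m : ℕ} {X : MatB m} (hX : X ∈ slodowySlice m) :
    X.toBlocks₂₁ = 1 ∧ X.toBlocks₂₂ = X.toBlocks₁₁ := by
  obtain ⟨Y, -, hY, rfl⟩ := hX
  rw [← fromBlocks_toBlocks Y] at hY ⊢
  simp only [fromBlocks_multiply, fromBlocks_inj, fromBlocks_add, toBlocks_fromBlocks₂₁,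
    toBlocks_fromBlocks₂₂, toBlocks_fromBlocks₁₁, mul_zero, zero_mul, mul_one, one_mul, add_zero,
    zero_add] at hY ⊢
  obtain ⟨h₂₁, h₂₂, -, -⟩ := hY
  rw [← h₂₁, h₂₂]
  exact ⟨add_zero 1, rfl⟩

theorem fromBlocks_mem_slodowySlice (m : ℕ) (z : ℂ) :
    fromBlocks 0 (z • 1) 1 0 ∈ slodowySlice m :=
  ⟨fromBlocks 0 (z • 1) 0 0, by simp [trace, Fintype.sum_sum_type], by simp [fromBlocks_multiply],
    by simp [fromBlocks_add]⟩

namespace funAlg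

variable {m : ℕ} {S : Set (MatB m)}

variable (m S) in
def coordMatrix : Matrix (Fin m ⊕ Fin m) (Fin m ⊕ Fin m) (funAlg m S) :=
  of fun i j => ⟨fun X => X.1 i j, Algebra.subset_adjoin ⟨i, j, rfl⟩⟩

variable (m S) in
def casimir : funAlg m S :=
  (2 * m : ℂ)⁻¹ • trace (coordMatrix m S * coordMatrix m S)

variable (m S) in
def sqIdeal : Ideal (funAlg m S) :=
  Ideal.span {p | ∃ i j, p = (coordMatrix m S * coordMatrix m S - casimir m S • 1) i j}

def evalAt (X : S) : funAlg m S →ₐ[ℂ] ℂ :=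
  (Pi.evalAlgHom ℂ (fun _ => ℂ) X).comp (funAlg m S).val

theorem ext_evalAt {r s : funAlg m S} (h : ∀ X, evalAt X r = evalAt X s) : r = s :=
  Subtype.ext (funext h)

theorem mapMatrix_evalAt_coordMatrix (X : S) : (evalAt X).mapMatrix (coordMatrix m S) = X.1 :=
  rfl

theorem evalAt_casimir (X : S) :
    evalAt X (casimir m S) = (X.1 * X.1).trace / (2 * m) := by
  rw [casimir, map_smul, AddMonoidHom.map_trace, ← AlgHom.mapMatrix_apply, map_mul,
    mapMatrix_evalAt_coordMatrix, smul_eq_mul, div_eq_inv_mul]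

theorem evalAt_sq_sub_casimir_apply (X : S) (i j : Fin m ⊕ Fin m) :
    evalAt X ((coordMatrix m S * coordMatrix m S - casimir m S • 1) i j) =
      (X.1 * X.1) i j - (X.1 * X.1).trace / (2 * m) * (1 : MatB m) i j := by
  have hsq : (evalAt X).mapMatrix (coordMatrix m S * coordMatrix m S) = X.1 * X.1 := by
    rw [map_mul, mapMatrix_evalAt_coordMatrix]
  rw [Matrix.sub_apply, Matrix.smul_apply, smul_eq_mul, map_sub, map_mul, evalAt_casimir, ← hsq]
  rw [one_apply, one_apply]
  split_ifs <;> simp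

theorem span_eq_sqIdeal :
    Ideal.span {p : funAlg m S | ∃ i j : Fin m ⊕ Fin m, (p : ↥S → ℂ) = fun X =>
      (X.1 * X.1) i j - ((X.1 * X.1).trace / (2 * m)) * (1 : MatB m) i j} = sqIdeal m S := by
  congr 1
  ext p
  refine exists₂_congr fun i j => ⟨fun h => ext_evalAt fun X => ?_, fun h => ?_⟩
  · exact (congr_fun h X).trans (evalAt_sq_sub_casimir_apply X i j).symm
  · exact h ▸ funext (evalAt_sq_sub_casimir_apply · i j)

section Slice

variable (hS : ∀ X ∈ S, X.toBlocks₂₁ = 1 ∧ X.toBlocks₂₂ = X.toBlocks₁₁)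
include hS

theorem coordMatrix_eq_fromBlocks :
    coordMatrix m S = fromBlocks (coordMatrix m S).toBlocks₁₁ (coordMatrix m S).toBlocks₁₂ 1
      (coordMatrix m S).toBlocks₁₁ := by
  conv_lhs => rw [← fromBlocks_toBlocks (coordMatrix m S)]
  congr 1 <;> refine Matrix.ext fun i j => ext_evalAt fun X => ?_
  · exact (congr_fun₂ (hS X X.2).1 i j).trans (congr_fun₂ (map_one (evalAt X).mapMatrix) i j).symm
  · exact congr_fun₂ (hS X X.2).2 i j

theorem mapMatrix_mk_coordMatrix :
    (Ideal.Quotient.mkₐ ℂ (sqIdeal m S)).mapMatrix (coordMatrix m S) =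
      fromBlocks 0 (Ideal.Quotient.mkₐ ℂ (sqIdeal m S) (casimir m S) • 1) 1 0 := by
  set π := Ideal.Quotient.mkₐ ℂ (sqIdeal m S)
  have hsq :
      π.mapMatrix (coordMatrix m S) * π.mapMatrix (coordMatrix m S) = π (casimir m S) • 1 := by
    have h : π.mapMatrix (coordMatrix m S * coordMatrix m S - casimir m S • 1) = 0 :=
      Matrix.ext fun i j => Ideal.Quotient.eq_zero_iff_mem.mpr (Ideal.subset_span ⟨i, j, rfl⟩)
    rw [map_sub, map_mul, sub_eq_zero] at h
    rw [h, AlgHom.mapMatrix_apply, Matrix.map_smul' _ _ _ (map_mul π),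
      Matrix.map_one _ (map_zero π) (map_one π)]
  have h2 : IsUnit (2 : funAlg m S ⧸ sqIdeal m S) := by
    have := (IsUnit.mk0 (2 : ℂ) two_ne_zero).map (algebraMap ℂ (funAlg m S ⧸ sqIdeal m S))
    rwa [map_ofNat] at this
  rw [coordMatrix_eq_fromBlocks hS] at hsq ⊢
  simp only [AlgHom.mapMatrix_apply, fromBlocks_map, Matrix.map_one _ (map_zero π) (map_one π)]
    at hsq ⊢
  exact fromBlocks_eq_of_mul_self_eq_smul_one h2 hsq

theorem adjoin_mk_casimir_eq_top :
    Algebra.adjoin ℂ {Ideal.Quotient.mkₐ ℂ (sqIdeal m S) (casimir m S)} = ⊤ := by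
  set π := Ideal.Quotient.mkₐ ℂ (sqIdeal m S)
  rw [eq_top_iff]
  rintro q -
  obtain ⟨r, rfl⟩ := Ideal.Quotient.mkₐ_surjective ℂ _ q
  suffices ⊤ ≤ (Algebra.adjoin ℂ {π (casimir m S)}).comap π from this trivial
  have htop : Algebra.adjoin ℂ (((↑) : funAlg m S → (S → ℂ)) ⁻¹'
      {p | ∃ i j : Fin m ⊕ Fin m, p = fun X => X.1 i j}) = ⊤ :=
    Algebra.adjoin_adjoin_coe_preimage
  rw [← htop, Algebra.adjoin_le_iff]
  rintro r ⟨i, j, hr⟩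
  obtain rfl : r = coordMatrix m S i j := Subtype.ext hr
  change π.mapMatrix (coordMatrix m S) i j ∈ Algebra.adjoin ℂ {π (casimir m S)}
  rw [mapMatrix_mk_coordMatrix hS]
  rcases i with i | i <;> rcases j with j | j <;>
    simp only [fromBlocks_apply₁₁, fromBlocks_apply₁₂, fromBlocks_apply₂₁, fromBlocks_apply₂₂,
      Matrix.zero_apply, Matrix.smul_apply, one_apply] <;>
    (try split_ifs) <;> simp [Algebra.self_mem_adjoin_singleton, π]

end Slice

theorem exists_algHom_mk_casimir_eq (hpt : ∀ z : ℂ, fromBlocks 0 (z • 1) 1 0 ∈ S) (hm : m ≠ 0)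
    (z : ℂ) : ∃ ψ : funAlg m S ⧸ sqIdeal m S →ₐ[ℂ] ℂ,
      ψ (Ideal.Quotient.mkₐ ℂ (sqIdeal m S) (casimir m S)) = z := by
  set X : S := ⟨_, hpt z⟩
  have hsq : X.1 * X.1 = z • 1 := by
    simp [X, fromBlocks_multiply, ← fromBlocks_one, fromBlocks_smul]
  have htr : (X.1 * X.1).trace / (2 * m) = z := by
    rw [hsq, trace_smul, trace_one, Fintype.card_sum, Fintype.card_fin, smul_eq_mul]
    push_cast
    field_simp
    ring
  have hker : sqIdeal m S ≤ RingHom.ker (evalAt X) := by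
    refine Ideal.span_le.mpr ?_
    rintro _ ⟨i, j, rfl⟩
    rw [SetLike.mem_coe, RingHom.mem_ker, evalAt_sq_sub_casimir_apply, htr, hsq, Matrix.smul_apply,
      smul_eq_mul, sub_self]
  exact ⟨Ideal.Quotient.liftₐ _ (evalAt X) hker, (evalAt_casimir X).trans htr⟩

theorem nonempty_algEquiv_polynomial
    (hS : ∀ X ∈ S, X.toBlocks₂₁ = 1 ∧ X.toBlocks₂₂ = X.toBlocks₁₁)
    (hpt : ∀ z : ℂ, fromBlocks 0 (z • 1) 1 0 ∈ S) (hm : m ≠ 0) :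
    Nonempty ((funAlg m S ⧸ sqIdeal m S) ≃ₐ[ℂ] Polynomial ℂ) :=
  nonempty_algEquiv_polynomial_of_adjoin_eq_top (Ideal.Quotient.mkₐ ℂ _ (casimir m S))
    (adjoin_mk_casimir_eq_top hS)
    (exists_algHom_mk_casimir_eq hpt hm)

end funAlg

theorem stmt_15 (m : ℕ) (hm : 2 ≤ m)
    -- `e = Σ_{i=1}^m E_{i,m+i}` and `f = Σ_{i=1}^m E_{m+i,i}` in `sl_{2m}(ℂ)`
    (e f : MatB m)
    (he : e = Matrix.fromBlocks 0 1 0 0)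
    (hf : f = Matrix.fromBlocks 0 0 1 0)
    -- the Slodowy slice `𝒮 = f + g^e`, where `g^e` is the centralizer of `e` in `sl_{2m}`
    (S : Set (MatB m))
    (hS : S = {X | ∃ Y : MatB m, Y.trace = 0 ∧ Y * e = e * Y ∧ X = f + Y})
    -- `Ī` is the ideal of `R = ℂ[𝒮]` generated by the restrictions to `𝒮` of the entries
    -- of `X ↦ X² − (tr(X²)/2m)·I_{2m}`
    (Ibar : Ideal (funAlg m S))
    (hI : Ibar = Ideal.span {p : funAlg m S | ∃ i j : Fin m ⊕ Fin m,
      (p : ↥S → ℂ) = fun X =>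
        (X.1 * X.1) i j - ((X.1 * X.1).trace / (2 * m)) * (1 : MatB m) i j}) :
    Nonempty ((funAlg m S ⧸ Ibar) ≃ₐ[ℂ] Polynomial ℂ) := by
  subst he hf
  obtain rfl : S = slodowySlice m := hS
  rw [hI, funAlg.span_eq_sqIdeal]
  exact funAlg.nonempty_algEquiv_polynomial (fun _ => toBlocks_of_mem_slodowySlice)
    (fromBlocks_mem_slodowySlice m) (by omega)
end
end

section
/- Let r ≥ 2, let 0 ≤ k ≤ r−2 and let 1 ≤ i_1 < ⋯ < i_k ≤ r−2 be integers. In ℚ^r, set ϖ_i = e_1 + ⋯ + e_i for 1 ≤ i ≤ r−2, ϖ_{r−1} = (1/2)(e_1 + ⋯ + e_{r−1} − e_r) and ϖ_r = (1/2)(e_1 + ⋯ + e_{r−1} + e_r), where e_1, …, e_r is the standard basis. Then every coordinate of each of the two vectors Σ_{j=1}^{k}(−1)^{k−j+1}·ϖ_{i_j} + ϖ_{r−1} and Σ_{j=1}^{k}(−1)^{k−j+1}·ϖ_{i_j} + ϖ_r equals 1/2 or −1/2. -/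
/-!
In coordinate `a` (0-indexed), `ϖ_{i_j}` contributes `1` exactly for the `j` with `a < i_j`,
a final segment of `1, …, k`. Read from `j = k` downwards the signed terms are `-1, +1, -1, …`,
so the alternating sum is `0` or `-1`, and `-1` forces `a < i_k ≤ r - 2`, where both `ϖ_{r-1}` and
`ϖ_r` have coordinate `1/2`.
-/

open Finset

lemma alternating_sum_ite_eq_zero_or_neg_one {R : Type*} [Ring R] (p : ℕ → Prop)
    [DecidablePred p] (k : ℕ) (hp : ∀ b c : ℕ, 1 ≤ b → b < c → c ≤ k → p b → p c) :
    (∑ j ∈ Icc 1 k, (-1 : R) ^ (k - j + 1) * if p j then 1 else 0) = 0 ∨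
      ((∑ j ∈ Icc 1 k, (-1 : R) ^ (k - j + 1) * if p j then 1 else 0) = -1 ∧ 1 ≤ k ∧ p k) := by
  induction k with
  | zero => simp
  | succ k ih =>
    have hshift : (∑ j ∈ Icc 1 k, (-1 : R) ^ (k + 1 - j + 1) * if p j then 1 else 0) =
        -∑ j ∈ Icc 1 k, (-1 : R) ^ (k - j + 1) * if p j then 1 else 0 := by
      rw [← sum_neg_distrib]
      refine sum_congr rfl fun j hj => ?_
      rw [show k + 1 - j + 1 = k - j + 1 + 1 by grind, pow_succ]
      noncomm_ring
    rw [sum_Icc_succ_top (by omega), hshift, Nat.sub_self, zero_add, pow_one]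
    rcases ih fun b c hb hbc hc => hp b c hb hbc (by omega) with h | ⟨h, hk, hpk⟩
    · rw [h]
      by_cases hpk : p (k + 1) <;> simp [hpk]
    · rw [h, if_pos (hp k (k + 1) hk (by omega) le_rfl hpk)]
      simp

theorem stmt_17_general (r k : ℕ)
    (ii : ℕ → ℕ)
    (hrange : ∀ l : ℕ, 1 ≤ l → l ≤ k → 1 ≤ ii l ∧ ii l ≤ r - 2)
    (hmono : ∀ a b : ℕ, 1 ≤ a → a < b → b ≤ k → ii a < ii b)
    -- `ϖ_i = e_1 + ⋯ + e_i` for `1 ≤ i ≤ r−2`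
    (w : ℕ → Fin r → ℚ)
    (hw : ∀ i : ℕ, 1 ≤ i → i ≤ r - 2 → w i = fun a : Fin r => if (a : ℕ) < i then 1 else 0)
    -- `ϖ_{r−1} = (1/2)(e_1 + ⋯ + e_{r−1} − e_r)` and `ϖ_r = (1/2)(e_1 + ⋯ + e_{r−1} + e_r)`
    (wrm wr : Fin r → ℚ)
    (hwrm : wrm = fun a : Fin r => if (a : ℕ) < r - 1 then 1 / 2 else -(1 / 2))
    (hwr : wr = fun _ : Fin r => 1 / 2) :
    (∀ a : Fin r,
      (∑ j ∈ Finset.Icc 1 k, (-1 : ℚ) ^ (k - j + 1) * w (ii j) a) + wrm a = 1 / 2 ∨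
      (∑ j ∈ Finset.Icc 1 k, (-1 : ℚ) ^ (k - j + 1) * w (ii j) a) + wrm a = -(1 / 2)) ∧
    (∀ a : Fin r,
      (∑ j ∈ Finset.Icc 1 k, (-1 : ℚ) ^ (k - j + 1) * w (ii j) a) + wr a = 1 / 2 ∨
      (∑ j ∈ Finset.Icc 1 k, (-1 : ℚ) ^ (k - j + 1) * w (ii j) a) + wr a = -(1 / 2)) := by
  have hcoord (a : Fin r) :
      (∑ j ∈ Icc 1 k, (-1 : ℚ) ^ (k - j + 1) * w (ii j) a) = 0 ∨
      ((∑ j ∈ Icc 1 k, (-1 : ℚ) ^ (k - j + 1) * w (ii j) a) = -1 ∧ (a : ℕ) < r - 1) := by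
    have hsum : (∑ j ∈ Icc 1 k, (-1 : ℚ) ^ (k - j + 1) * w (ii j) a) =
        ∑ j ∈ Icc 1 k, (-1 : ℚ) ^ (k - j + 1) * if (a : ℕ) < ii j then 1 else 0 :=
      sum_congr rfl fun j hj => by
        obtain ⟨hlo, hhi⟩ := hrange j (mem_Icc.1 hj).1 (mem_Icc.1 hj).2
        rw [hw _ hlo hhi]
    rw [hsum]
    rcases alternating_sum_ite_eq_zero_or_neg_one (R := ℚ) (fun j => (a : ℕ) < ii j) k
        fun b c hb hbc hc hab => hab.trans (hmono b c hb hbc hc) with h | ⟨h, hk, hak⟩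
    · exact Or.inl h
    · exact Or.inr ⟨h, by have := (hrange k hk le_rfl).2; omega⟩
  refine ⟨fun a => ?_, fun a => ?_⟩ <;> rcases hcoord a with h | ⟨h, ha⟩
  · by_cases ha : (a : ℕ) < r - 1 <;> simp [h, hwrm, ha]
  · simp [h, hwrm, ha]; norm_num
  · simp [h, hwr]
  · simp [h, hwr]; norm_num

theorem stmt_17 (r k : ℕ) (hr : 2 ≤ r) (hk : k ≤ r - 2)
    (ii : ℕ → ℕ)
    (hrange : ∀ l : ℕ, 1 ≤ l → l ≤ k → 1 ≤ ii l ∧ ii l ≤ r - 2)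
    (hmono : ∀ a b : ℕ, 1 ≤ a → a < b → b ≤ k → ii a < ii b)
    -- `ϖ_i = e_1 + ⋯ + e_i` for `1 ≤ i ≤ r−2`
    (w : ℕ → Fin r → ℚ)
    (hw : ∀ i : ℕ, 1 ≤ i → i ≤ r - 2 → w i = fun a : Fin r => if (a : ℕ) < i then 1 else 0)
    -- `ϖ_{r−1} = (1/2)(e_1 + ⋯ + e_{r−1} − e_r)` and `ϖ_r = (1/2)(e_1 + ⋯ + e_{r−1} + e_r)`
    (wrm wr : Fin r → ℚ)
    (hwrm : wrm = fun a : Fin r => if (a : ℕ) < r - 1 then 1 / 2 else -(1 / 2))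
    (hwr : wr = fun _ : Fin r => 1 / 2) :
    (∀ a : Fin r,
      (∑ j ∈ Finset.Icc 1 k, (-1 : ℚ) ^ (k - j + 1) * w (ii j) a) + wrm a = 1 / 2 ∨
      (∑ j ∈ Finset.Icc 1 k, (-1 : ℚ) ^ (k - j + 1) * w (ii j) a) + wrm a = -(1 / 2)) ∧
    (∀ a : Fin r,
      (∑ j ∈ Finset.Icc 1 k, (-1 : ℚ) ^ (k - j + 1) * w (ii j) a) + wr a = 1 / 2 ∨
      (∑ j ∈ Finset.Icc 1 k, (-1 : ℚ) ^ (k - j + 1) * w (ii j) a) + wr a = -(1 / 2)) :=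
  stmt_17_general r k ii hrange hmono w hw wrm wr hwrm hwr
end
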